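/- arXiv:2104.00047 — 3 statements merged into one kernel-verified Lean document; each statement's English description precedes it below -/
import Mathlib

section
/- Under the auxiliary problem setting, if u and ũ are both solutions of the auxiliary problem on [0,T] for some T > 0, then u = ũ on closure(Q) × [0,T]. -/
noncomputable section
open Set

abbrev En (n : ℕ) := EuclideanSpace ℝ (Fin n)

/-- Partial derivative `∂ᵢ f` at `x`. -/
noncomputable def pd {n : ℕ} (f : En n → ℝ) (i : Fin n) (x : En n) : ℝ :=
  fderiv ℝ f x (EuclideanSpace.single i 1)

/-- `|∇f|²` at `x`. -/
noncomputable def gradNormSq {n : ℕ} (f : En n → ℝ) (x : En n) : ℝ :=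
  ∑ i : Fin n, (pd f i x) ^ 2

/-- `v(f) = √(1+|∇f|²)`. -/
noncomputable def graphV {n : ℕ} (f : En n → ℝ) (x : En n) : ℝ :=
  Real.sqrt (1 + gradNormSq f x)

/-- Mean curvature `H[f] = div(∇f / v(f))` of `graph f`. -/
noncomputable def meanCurv {n : ℕ} (f : En n → ℝ) (x : En n) : ℝ :=
  ∑ i : Fin n, pd (fun y => pd f i y / graphV f y) i x

/-- The operator `G[f](x) = v(f)(x) · H[f](x)^{α(x)}` (real power). -/
noncomputable def Gop {n : ℕ} (alp : En n → ℝ) (f : En n → ℝ) (x : En n) : ℝ :=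
  graphV f x * meanCurv f x ^ alp x

/-- The data of the auxiliary problem setting. -/
structure AuxSetting (n : ℕ) where
  /-- the bounded smooth domain -/
  Q : Set (En n)
  /-- defining function for the domain -/
  rho : En n → ℝ
  /-- the variable exponent -/
  alp : En n → ℝ
  /-- the initial datum -/
  u0 : En n → ℝ
  /-- the cut-off function -/
  xi : En n → ℝ
  /-- the constant in the boundary condition -/
  c : ℝ
  hn : 1 ≤ n
  hrho : ContDiff ℝ (⊤ : ℕ∞) rho
  hQdef : Q = {x | rho x < 0}
  hfront : frontier Q = {x | rho x = 0}
  hgrad : ∀ x ∈ frontier Q, fderiv ℝ rho x ≠ 0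
  hbdd : Bornology.IsBounded Q
  halp_smooth : ContDiffOn ℝ (⊤ : ℕ∞) alp (closure Q)
  halp_pos : ∀ x ∈ closure Q, 0 < alp x
  halp_one : ∃ V : Set (En n), IsOpen V ∧ frontier Q ⊆ V ∧ ∀ x ∈ V, alp x = 1
  hu0_smooth : ContDiffOn ℝ (⊤ : ℕ∞) u0 (closure Q)
  hu0_nonpos : ∀ x ∈ closure Q, u0 x ≤ 0
  hu0_bdry : ∀ x ∈ frontier Q, u0 x = 0
  hu0_H : ∀ x ∈ closure Q, 0 < meanCurv u0 x
  hc : 0 < c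
  hGc : ∀ x ∈ closure Q, c ≤ Gop alp u0 x
  hxi_smooth : ContDiffOn ℝ (⊤ : ℕ∞) xi (closure Q)
  hxi_range : ∀ x ∈ closure Q, xi x ∈ Set.Icc (0:ℝ) 1
  hxi_one : ∃ V : Set (En n), IsOpen V ∧ frontier Q ⊆ V ∧ ∀ x ∈ V, xi x = 1
  halp_xi : ∃ W : Set (En n), IsOpen W ∧ closure Q ∩ Function.support xi ⊆ W ∧
      ∀ x ∈ W, alp x = 1

/-- `u` is a solution of the auxiliary problem on `[0,T]`. -/
def IsAuxSolution {n : ℕ} (S : AuxSetting n) (T : ℝ) (u : En n → ℝ → ℝ) : Prop :=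
  ContDiffOn ℝ (⊤ : ℕ∞) (fun p : En n × ℝ => u p.1 p.2) (closure S.Q ×ˢ Set.Icc 0 T) ∧
  (∀ t ∈ Set.Icc (0:ℝ) T, ∀ x ∈ closure S.Q, 0 < meanCurv (fun y => u y t) x) ∧
  (∀ x ∈ S.Q, ∀ t ∈ Set.Ioc (0:ℝ) T,
    deriv (u x) t = Gop S.alp (fun y => u y t) x - S.xi x * (Gop S.alp S.u0 x - S.c)) ∧
  (∀ x ∈ frontier S.Q, ∀ t ∈ Set.Icc (0:ℝ) T, u x t = S.c * t) ∧
  (∀ x ∈ closure S.Q, u x 0 = S.u0 x)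

/-! ### Auxiliary lemmas -/

/-- bound for a PSD quadratic form: `pᵀNp ≤ |p|² tr N`. -/
lemma psd_quad_bound {n : ℕ} (N : Fin n → Fin n → ℝ)
    (key : ∀ i j : Fin n, ∀ x y : ℝ,
      0 ≤ N i i * x ^ 2 + (N i j + N j i) * (x * y) + N j j * y ^ 2)
    (p : Fin n → ℝ) :
    ∑ i, ∑ j, p i * p j * N i j ≤ (∑ i, p i ^ 2) * ∑ i, N i i := by
  have hdiag : ∀ i, 0 ≤ N i i := by
    intro i
    have := key i i 1 0
    simpa using this
  have hpair : ∀ i j, |N i j + N j i| ≤ 2 * (Real.sqrt (N i i) * Real.sqrt (N j j)) := by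
    intro i j
    have hd : discrim (N i i) (N i j + N j i) (N j j) ≤ 0 := by
      apply discrim_le_zero
      intro x
      have := key i j x 1
      nlinarith [this]
    rw [discrim] at hd
    have hsq : (N i j + N j i) ^ 2 ≤ (2 * (Real.sqrt (N i i) * Real.sqrt (N j j))) ^ 2 := by
      have h1 : Real.sqrt (N i i) ^ 2 = N i i := Real.sq_sqrt (hdiag i)
      have h2 : Real.sqrt (N j j) ^ 2 = N j j := Real.sq_sqrt (hdiag j)
      nlinarith [hd, h1, h2]
    have h2 : (0:ℝ) ≤ 2 * (Real.sqrt (N i i) * Real.sqrt (N j j)) := by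
      positivity
    have := Real.sqrt_le_sqrt hsq
    rwa [Real.sqrt_sq_eq_abs, Real.sqrt_sq h2] at this
  have hswap : ∑ i, ∑ j, p i * p j * N j i = ∑ i, ∑ j, p i * p j * N i j := by
    rw [Finset.sum_comm]
    exact Finset.sum_congr rfl fun i _ => Finset.sum_congr rfl fun j _ => by ring
  have hstep : ∑ i, ∑ j, p i * p j * (N i j + N j i)
      ≤ ∑ i, ∑ j, (|p i| * Real.sqrt (N i i)) * (|p j| * Real.sqrt (N j j)) * 2 := by
    apply Finset.sum_le_sum; intro i _
    apply Finset.sum_le_sum; intro j _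
    calc p i * p j * (N i j + N j i) ≤ |p i * p j * (N i j + N j i)| := le_abs_self _
      _ = |p i| * |p j| * |N i j + N j i| := by rw [abs_mul, abs_mul]
      _ ≤ |p i| * |p j| * (2 * (Real.sqrt (N i i) * Real.sqrt (N j j))) := by
          apply mul_le_mul_of_nonneg_left (hpair i j) (by positivity)
      _ = (|p i| * Real.sqrt (N i i)) * (|p j| * Real.sqrt (N j j)) * 2 := by ring
  have hsum : ∑ i, ∑ j, (|p i| * Real.sqrt (N i i)) * (|p j| * Real.sqrt (N j j)) * 2
      = 2 * (∑ i, |p i| * Real.sqrt (N i i)) ^ 2 := by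
    rw [pow_two, Finset.sum_mul_sum, Finset.mul_sum]
    exact Finset.sum_congr rfl fun i _ => by
      rw [Finset.mul_sum]
      exact Finset.sum_congr rfl fun j _ => by ring
  have hCS : (∑ i, |p i| * Real.sqrt (N i i)) ^ 2 ≤ (∑ i, p i ^ 2) * ∑ i, N i i := by
    have := Finset.sum_mul_sq_le_sq_mul_sq Finset.univ (fun i => |p i|) (fun i => Real.sqrt (N i i))
    have e1 : ∑ i : Fin n, |p i| ^ 2 = ∑ i : Fin n, p i ^ 2 :=
      Finset.sum_congr rfl fun i _ => sq_abs _
    have e2 : ∑ i : Fin n, Real.sqrt (N i i) ^ 2 = ∑ i : Fin n, N i i :=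
      Finset.sum_congr rfl fun i _ => Real.sq_sqrt (hdiag i)
    rw [e1, e2] at this
    exact this
  have hfin : 2 * (∑ i, ∑ j, p i * p j * N i j)
      = ∑ i, ∑ j, p i * p j * (N i j + N j i) := by
    rw [show ∑ i, ∑ j, p i * p j * (N i j + N j i)
        = ∑ i, ∑ j, p i * p j * N i j + ∑ i, ∑ j, p i * p j * N j i by
      rw [← Finset.sum_add_distrib]
      exact Finset.sum_congr rfl fun i _ => by
        rw [← Finset.sum_add_distrib]
        exact Finset.sum_congr rfl fun j _ => by ring]
    rw [hswap]; ring
  linarith [hstep.trans_eq hsum, hCS]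

/-- left-sided max implies derivative nonneg. -/
lemma deriv_nonneg_of_left_max {f : ℝ → ℝ} {a t0 f' : ℝ} (h : a < t0)
    (hf : HasDerivAt f f' t0) (hmax : ∀ t ∈ Icc a t0, f t ≤ f t0) : 0 ≤ f' := by
  have htend : Filter.Tendsto (slope f t0) (nhdsWithin t0 (Iio t0)) (nhds f') :=
    (hasDerivAt_iff_tendsto_slope.1 hf).mono_left
      (nhdsWithin_mono _ (fun y hy => ne_of_lt hy))
  refine ge_of_tendsto htend ?_
  filter_upwards [Ioo_mem_nhdsLT_of_mem (show t0 ∈ Ioc a t0 from ⟨h, le_refl _⟩)] with t ht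
  have h1 : f t - f t0 ≤ 0 := sub_nonpos.2 (hmax t ⟨ht.1.le, ht.2.le⟩)
  have h2 : t - t0 ≤ 0 := sub_nonpos.2 ht.2.le
  rw [slope_def_field]
  exact div_nonneg_of_nonpos h1 h2

/-- 1D second derivative test at a local max. -/
lemma second_deriv_nonpos_of_isLocalMax {h : ℝ → ℝ}
    (hsm : ∀ᶠ s in nhds (0:ℝ), ContDiffAt ℝ (⊤ : ℕ∞) h s)
    (hmax : IsLocalMax h 0) : deriv (deriv h) 0 ≤ 0 := by
  by_contra hpos
  push_neg at hpos
  have h0 : ContDiffAt ℝ (⊤ : ℕ∞) h 0 := hsm.self_of_nhds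
  have hd1 : deriv h 0 = 0 := hmax.deriv_eq_zero
  have hd2 : HasDerivAt (deriv h) (deriv (deriv h) 0) 0 := by
    have : ContDiffAt ℝ 1 (fderiv ℝ h) 0 := h0.fderiv_right (WithTop.coe_le_coe.2 le_top)
    have hdiff : DifferentiableAt ℝ (fun s => fderiv ℝ h s 1) 0 :=
      ((ContinuousLinearMap.apply ℝ ℝ (1:ℝ)).differentiable.differentiableAt).comp 0
        (this.differentiableAt one_ne_zero)
    have : DifferentiableAt ℝ (deriv h) 0 := hdiff
    exact this.hasDerivAt
  have htend : Filter.Tendsto (fun s => deriv h s / s) (nhdsWithin 0 (Ioi 0))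
      (nhds (deriv (deriv h) 0)) := by
    have := (hasDerivAt_iff_tendsto_slope.1 hd2).mono_left
      (nhdsWithin_mono _ (fun y (hy : y ∈ Ioi 0) => ne_of_gt hy))
    refine this.congr' ?_
    filter_upwards [self_mem_nhdsWithin] with s hs
    rw [slope_def_field, hd1]
    rw [sub_zero, sub_zero]
  have hev : ∀ᶠ s in nhdsWithin 0 (Ioi 0), 0 < deriv h s := by
    have h1 : ∀ᶠ s in nhdsWithin 0 (Ioi 0), 0 < deriv h s / s :=
      htend.eventually (eventually_gt_nhds hpos)
    filter_upwards [h1, self_mem_nhdsWithin] with s hs hs'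
    by_contra hc
    push_neg at hc
    have : deriv h s / s ≤ 0 := div_nonpos_of_nonpos_of_nonneg hc (le_of_lt hs')
    linarith
  obtain ⟨δ, hδpos, hδ⟩ := (mem_nhdsGT_iff_exists_Ioo_subset).1 hev
  obtain ⟨ε, hεpos, hε⟩ := Metric.eventually_nhds_iff.1 (hsm.and hmax)
  set δ' := min (δ/2) (ε/2) with hδ'def
  have hδ'pos : 0 < δ' := lt_min (by linarith [mem_Ioi.1 hδpos]) (by linarith)
  have hmono : StrictMonoOn h (Icc 0 δ') := by
    apply strictMonoOn_of_deriv_pos (convex_Icc 0 δ')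
    · intro s hs
      have : dist s 0 < ε := by
        rw [Real.dist_eq, sub_zero, abs_of_nonneg hs.1]
        calc s ≤ δ' := hs.2
          _ ≤ ε/2 := min_le_right _ _
          _ < ε := by linarith
      exact ((hε this).1.continuousAt.continuousWithinAt)
    · intro s hs
      rw [interior_Icc] at hs
      refine hδ ⟨hs.1, ?_⟩
      calc s < δ' := hs.2
        _ ≤ δ/2 := min_le_left _ _
        _ < δ := by linarith [mem_Ioi.1 hδpos]
  have hlt : h 0 < h δ' := hmono (left_mem_Icc.2 hδ'pos.le) (right_mem_Icc.2 hδ'pos.le) hδ'pos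
  have hle : h δ' ≤ h 0 := by
    refine (hε ?_).2
    rw [Real.dist_eq, sub_zero, abs_of_nonneg hδ'pos.le]
    calc δ' ≤ ε/2 := min_le_right _ _
      _ < ε := by linarith
  linarith

lemma euclid_decomp {n : ℕ} (q : En n) :
    q = ∑ i : Fin n, q i • (EuclideanSpace.single i (1:ℝ)) := by
  ext k
  rw [show ((∑ i : Fin n, q i • (EuclideanSpace.single i (1:ℝ))) : En n) k
      = ∑ i : Fin n, (q i • (EuclideanSpace.single i (1:ℝ)) : En n) k from
    by rw [WithLp.ofLp_sum]; exact Finset.sum_apply k Finset.univ _]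
  simp [EuclideanSpace.single_apply]

lemma clm_decomp {n : ℕ} (L : En n →L[ℝ] ℝ) (q : En n) :
    L q = ∑ i : Fin n, q i * L (EuclideanSpace.single i 1) := by
  conv_lhs => rw [euclid_decomp q]
  rw [map_sum]
  exact Finset.sum_congr rfl fun i _ => by rw [map_smul, smul_eq_mul]

/-- second partial derivatives -/
noncomputable def pd2 {n : ℕ} (f : En n → ℝ) (i j : Fin n) (x : En n) : ℝ :=
  pd (fun y => pd f i y) j x

lemma gradNormSq_nonneg {n : ℕ} (f : En n → ℝ) (x : En n) : 0 ≤ gradNormSq f x :=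
  Finset.sum_nonneg fun i _ => sq_nonneg _

lemma one_add_gradNormSq_pos {n : ℕ} (f : En n → ℝ) (x : En n) : 0 < 1 + gradNormSq f x := by
  linarith [gradNormSq_nonneg f x]

lemma graphV_pos {n : ℕ} (f : En n → ℝ) (x : En n) : 0 < graphV f x :=
  Real.sqrt_pos.2 (one_add_gradNormSq_pos f x)

lemma graphV_sq {n : ℕ} (f : En n → ℝ) (x : En n) :
    (graphV f x) ^ 2 = 1 + gradNormSq f x :=
  Real.sq_sqrt (one_add_gradNormSq_pos f x).le

section calc_lemmas
variable {n : ℕ} {f : En n → ℝ} {O : Set (En n)} {x : En n}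

lemma diffAt_of_contDiffOn (hO : IsOpen O) (hf : ContDiffOn ℝ (⊤ : ℕ∞) f O) (hx : x ∈ O) :
    DifferentiableAt ℝ f x :=
  (hf.differentiableOn (by simp)).differentiableAt (hO.mem_nhds hx)

lemma contDiffOn_pd (hO : IsOpen O) (hf : ContDiffOn ℝ (⊤ : ℕ∞) f O) (i : Fin n) :
    ContDiffOn ℝ (⊤ : ℕ∞) (pd f i) O := by
  have h1 : ContDiffOn ℝ (⊤ : ℕ∞) (fderiv ℝ f) O := hf.fderiv_of_isOpen hO (by simp)
  exact (ContinuousLinearMap.apply ℝ ℝ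
    (EuclideanSpace.single i (1:ℝ))).contDiff.comp_contDiffOn h1

lemma diffAt_pd (hO : IsOpen O) (hf : ContDiffOn ℝ (⊤ : ℕ∞) f O) (hx : x ∈ O) (i : Fin n) :
    DifferentiableAt ℝ (pd f i) x :=
  ((contDiffOn_pd hO hf i).differentiableOn (by simp)).differentiableAt (hO.mem_nhds hx)

lemma hasFDerivAt_gradNormSq (hO : IsOpen O) (hf : ContDiffOn ℝ (⊤ : ℕ∞) f O) (hx : x ∈ O) :
    HasFDerivAt (gradNormSq f)
      (∑ i : Fin n, (2 * pd f i x) • fderiv ℝ (pd f i) x) x := by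
  have h : ∀ i ∈ Finset.univ, HasFDerivAt (fun y => (pd f i y) ^ 2)
      ((2 * pd f i x) • fderiv ℝ (pd f i) x) x := by
    intro i _
    have hD := (diffAt_pd hO hf hx i).hasFDerivAt
    have h2 := hD.mul hD
    have heq : (fun y => (pd f i y) ^ 2) = fun y => pd f i y * pd f i y := by
      funext y; ring
    rw [heq]
    rw [two_mul, add_smul]
    exact h2
  exact HasFDerivAt.fun_sum h

lemma hasFDerivAt_graphV (hO : IsOpen O) (hf : ContDiffOn ℝ (⊤ : ℕ∞) f O) (hx : x ∈ O) :
    HasFDerivAt (graphV f)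
      ((1 / (2 * graphV f x)) • ∑ i : Fin n, (2 * pd f i x) • fderiv ℝ (pd f i) x) x := by
  have h1 : HasFDerivAt (fun y => 1 + gradNormSq f y)
      (∑ i : Fin n, (2 * pd f i x) • fderiv ℝ (pd f i) x) x :=
    (hasFDerivAt_gradNormSq hO hf hx).const_add 1
  have h2 := Real.hasDerivAt_sqrt (ne_of_gt (one_add_gradNormSq_pos f x))
  exact h2.comp_hasFDerivAt x h1

lemma meanCurv_formula (hO : IsOpen O) (hf : ContDiffOn ℝ (⊤ : ℕ∞) f O) (hx : x ∈ O) :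
    meanCurv f x = (∑ i : Fin n, pd2 f i i x) / graphV f x
      - (∑ i : Fin n, ∑ j : Fin n, pd f i x * (pd f j x * pd2 f j i x)) / (graphV f x) ^ 3 := by
  have hV := graphV_pos f x
  have hterm : ∀ i : Fin n, pd (fun y => pd f i y / graphV f y) i x
      = pd2 f i i x / graphV f x
        - pd f i x * (∑ j : Fin n, pd f j x * pd2 f j i x) / (graphV f x) ^ 3 := by
    intro i
    have hG := hasFDerivAt_graphV hO hf hx
    have hinv := (hasDerivAt_inv (ne_of_gt hV)).comp_hasFDerivAt x hG
    have hq := ((diffAt_pd hO hf hx i).hasFDerivAt).mul hinv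
    have heq : (fun y => pd f i y / graphV f y)
        = fun y => pd f i y * ((fun z : ℝ => z⁻¹) ∘ graphV f) y := by
      funext y; simp [div_eq_mul_inv, Function.comp]
    have hfd : fderiv ℝ (fun y => pd f i y / graphV f y) x
        = pd f i x • ((-((graphV f x) ^ 2)⁻¹) •
            ((1 / (2 * graphV f x)) • ∑ j : Fin n, (2 * pd f j x) • fderiv ℝ (pd f j) x))
          + ((fun z : ℝ => z⁻¹) ∘ graphV f) x • fderiv ℝ (pd f i) x := by
      rw [heq]; exact hq.fderiv
    have hpd : pd (fun y => pd f i y / graphV f y) i x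
        = (fderiv ℝ (fun y => pd f i y / graphV f y) x) (EuclideanSpace.single i 1) := rfl
    rw [hpd, hfd]
    simp only [ContinuousLinearMap.add_apply, ContinuousLinearMap.smul_apply,
      ContinuousLinearMap.coe_sum', Finset.sum_apply, smul_eq_mul, Function.comp]
    have hsum : ∑ j : Fin n, (2 * pd f j x) * (fderiv ℝ (pd f j) x) (EuclideanSpace.single i 1)
        = 2 * ∑ j : Fin n, pd f j x * pd2 f j i x := by
      rw [Finset.mul_sum]
      exact Finset.sum_congr rfl fun j _ => by
        show (2 * pd f j x) * pd2 f j i x = _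
        ring
    rw [hsum]
    show pd f i x * (-((graphV f x) ^ 2)⁻¹ * ((1 / (2 * graphV f x)) *
        (2 * ∑ j : Fin n, pd f j x * pd2 f j i x)))
      + (graphV f x)⁻¹ * pd2 f i i x = _
    field_simp
    ring
  rw [meanCurv]
  rw [Finset.sum_congr rfl fun i _ => hterm i]
  rw [Finset.sum_sub_distrib, ← Finset.sum_div, ← Finset.sum_div]
  simp [Finset.mul_sum]

lemma quadform_line (hO : IsOpen O) (hf : ContDiffOn ℝ (⊤ : ℕ∞) f O) (hx : x ∈ O) (q : En n) :
    deriv (deriv (fun s : ℝ => f (x + s • q))) 0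
      = ∑ i : Fin n, ∑ j : Fin n, q i * (q j * pd2 f i j x) := by
  have hL : ∀ s : ℝ, HasDerivAt (fun s : ℝ => x + s • q) q s := by
    intro s
    simpa using ((hasDerivAt_id s).smul_const q).const_add x
  have hpt : x + (0:ℝ) • q = x := by simp
  have hev : ∀ᶠ s in nhds (0:ℝ), x + s • q ∈ O := by
    have hcont : Continuous (fun s : ℝ => x + s • q) :=
      continuous_const.add (continuous_id.smul continuous_const)
    have h0 : Filter.Tendsto (fun s : ℝ => x + s • q) (nhds 0) (nhds x) := by
      have := hcont.continuousAt (x := (0:ℝ))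
      rwa [ContinuousAt, hpt] at this
    exact h0.eventually (hO.eventually_mem hx)
  have hderiv1 : deriv (fun s : ℝ => f (x + s • q))
      =ᶠ[nhds (0:ℝ)] fun s => ∑ i : Fin n, q i * pd f i (x + s • q) := by
    filter_upwards [hev] with s hs
    have hF := (diffAt_of_contDiffOn hO hf hs).hasFDerivAt
    have hc : HasDerivAt (fun s : ℝ => f (x + s • q)) ((fderiv ℝ f (x + s • q)) q) s :=
      hF.comp_hasDerivAt s (hL s)
    rw [hc.deriv]
    exact clm_decomp _ _
  rw [hderiv1.deriv_eq]
  have hsum : HasDerivAt (fun s : ℝ => ∑ i : Fin n, q i * pd f i (x + s • q))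
      (∑ i : Fin n, q i * (fderiv ℝ (pd f i) x q)) 0 := by
    apply HasDerivAt.fun_sum
    intro i _
    have hDi := (diffAt_pd hO hf hx i).hasFDerivAt
    rw [← hpt] at hDi
    have h1 := hDi.comp_hasDerivAt 0 (hL 0)
    rw [hpt] at h1
    exact h1.const_mul (q i)
  rw [hsum.deriv]
  exact Finset.sum_congr rfl fun i _ => by
    rw [clm_decomp (fderiv ℝ (pd f i) x) q, Finset.mul_sum]
    exact Finset.sum_congr rfl fun j _ => rfl

end calc_lemmas

lemma collapse_c {n : ℕ} (c : ℝ) (N : Fin n → Fin n → ℝ) (i j : Fin n) :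
    ∑ i' : Fin n, ∑ j' : Fin n,
      c * ((if i' = i then (1:ℝ) else 0) * ((if j' = j then (1:ℝ) else 0) * N i' j'))
    = c * N i j := by
  rw [Finset.sum_eq_single i]
  · rw [Finset.sum_eq_single j]
    · simp
    · intro b _ hb; simp [hb]
    · intro hj; exact absurd (Finset.mem_univ j) hj
  · intro b _ hb
    simp [hb]
  · intro hi; exact absurd (Finset.mem_univ i) hi

set_option maxHeartbeats 2000000 in
/-- **One-sided comparison for the auxiliary problem.** -/
lemma aux_le {n : ℕ} (S : AuxSetting n) (T : ℝ) (hT : 0 < T)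
    (u v : En n → ℝ → ℝ) (hu : IsAuxSolution S T u) (hv : IsAuxSolution S T v) :
    ∀ x ∈ closure S.Q, ∀ t ∈ Set.Icc (0:ℝ) T, u x t ≤ v x t := by
  obtain ⟨hUsm, hUH, hUpde, hUbc, hUic⟩ := hu
  obtain ⟨hVsm, hVH, hVpde, hVbc, hVic⟩ := hv
  have hQopen : IsOpen S.Q := by
    rw [S.hQdef]
    exact isOpen_lt S.hrho.continuous continuous_const
  -- Main claim for T' < T
  have key : ∀ T', 0 < T' → T' < T → ∀ x ∈ closure S.Q, ∀ t ∈ Icc (0:ℝ) T',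
      u x t ≤ v x t := by
    intro T' hT'pos hT'lt
    by_contra hcon
    push_neg at hcon
    obtain ⟨x1, hx1, t1, ht1, hgt⟩ := hcon
    set δ := u x1 t1 - v x1 t1 with hδdef
    have hδpos : 0 < δ := by simp only [hδdef]; linarith
    set ε := δ / (2 * T') with hεdef
    have hεpos : 0 < ε := by positivity
    set φ : En n × ℝ → ℝ := fun p => u p.1 p.2 - v p.1 p.2 - ε * p.2 with hφdef
    set K : Set (En n × ℝ) := closure S.Q ×ˢ Icc 0 T' with hKdef
    have hKsub : K ⊆ closure S.Q ×ˢ Icc 0 T :=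
      prod_mono Subset.rfl (Icc_subset_Icc le_rfl hT'lt.le)
    have hKcomp : IsCompact K :=
      (Metric.isCompact_of_isClosed_isBounded isClosed_closure S.hbdd.closure).prod
        isCompact_Icc
    have hφcont : ContinuousOn φ K :=
      ((hUsm.continuousOn.mono hKsub).sub (hVsm.continuousOn.mono hKsub)).sub
        ((continuous_const.mul continuous_snd).continuousOn)
    have hKne : K.Nonempty := ⟨(x1, t1), hx1, ht1⟩
    obtain ⟨⟨x0, t0⟩, hmem, hmax⟩ := hKcomp.exists_isMaxOn hKne hφcont
    obtain ⟨hx0cl, ht0⟩ := hmem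
    replace hx0cl : x0 ∈ closure S.Q := hx0cl
    replace ht0 : t0 ∈ Icc (0:ℝ) T' := ht0
    have hmax' : ∀ y ∈ closure S.Q, ∀ s ∈ Icc (0:ℝ) T',
        u y s - v y s - ε * s ≤ u x0 t0 - v x0 t0 - ε * t0 :=
      fun y hy s hs => hmax (show (y, s) ∈ K from ⟨hy, hs⟩)
    have hφ0 : δ/2 ≤ u x0 t0 - v x0 t0 - ε * t0 := by
      have h1 := hmax' x1 hx1 t1 ht1
      have h2 : ε * t1 ≤ δ/2 := by
        have h2a : ε * t1 ≤ ε * T' := mul_le_mul_of_nonneg_left ht1.2 hεpos.le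
        have hT'ne : T' ≠ 0 := ne_of_gt hT'pos
        calc ε * t1 ≤ ε * T' := h2a
          _ = δ/2 := by rw [hεdef]; field_simp
      rw [hδdef] at h2 ⊢
      linarith
    have ht0pos : 0 < t0 := by
      rcases ht0.1.lt_or_eq with h | h
      · exact h
      · exfalso
        have hz : u x0 t0 - v x0 t0 - ε * t0 = 0 := by
          rw [← h, hUic x0 hx0cl, hVic x0 hx0cl]
          ring
        linarith
    have hx0Q : x0 ∈ S.Q := by
      have hcl : x0 ∈ S.Q ∪ frontier S.Q := by
        rw [← closure_eq_self_union_frontier]; exact hx0cl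
      rcases hcl with h | h
      · exact h
      · exfalso
        have ht0T : t0 ∈ Icc (0:ℝ) T := ⟨ht0.1, ht0.2.trans hT'lt.le⟩
        have hz : u x0 t0 - v x0 t0 - ε * t0 = -(ε * t0) := by
          rw [hUbc x0 h t0 ht0T, hVbc x0 h t0 ht0T]
          ring
        nlinarith [mul_nonneg hεpos.le ht0.1]
    have ht0T : t0 < T := lt_of_le_of_lt ht0.2 hT'lt
    have hsub' : S.Q ×ˢ Ioo (0:ℝ) T ⊆ closure S.Q ×ˢ Icc 0 T :=
      prod_mono subset_closure Ioo_subset_Icc_self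
    have hmemo : (x0, t0) ∈ S.Q ×ˢ Ioo (0:ℝ) T := ⟨hx0Q, ht0pos, ht0T⟩
    have hUat : ContDiffAt ℝ (⊤ : ℕ∞) (fun p : En n × ℝ => u p.1 p.2) (x0, t0) :=
      (hUsm.mono hsub').contDiffAt ((hQopen.prod isOpen_Ioo).mem_nhds hmemo)
    have hVat : ContDiffAt ℝ (⊤ : ℕ∞) (fun p : En n × ℝ => v p.1 p.2) (x0, t0) :=
      (hVsm.mono hsub').contDiffAt ((hQopen.prod isOpen_Ioo).mem_nhds hmemo)
    -- time regularity
    have hUt : DifferentiableAt ℝ (u x0) t0 := by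
      have := (hUat.comp t0 ((contDiffAt_const (c := x0)).prodMk contDiffAt_id)).differentiableAt
        (by simp)
      exact this
    have hVt : DifferentiableAt ℝ (v x0) t0 := by
      have := (hVat.comp t0 ((contDiffAt_const (c := x0)).prodMk contDiffAt_id)).differentiableAt
        (by simp)
      exact this
    -- spatial slices are smooth on Q
    have hmap : MapsTo (fun y : En n => (y, t0)) S.Q (closure S.Q ×ˢ Icc 0 T) :=
      fun y hy => ⟨subset_closure hy, ht0.1, ht0.2.trans hT'lt.le⟩
    have hu'sm : ContDiffOn ℝ (⊤ : ℕ∞) (fun y => u y t0) S.Q :=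
      hUsm.comp ((contDiff_id.prodMk contDiff_const).contDiffOn) hmap
    have hv'sm : ContDiffOn ℝ (⊤ : ℕ∞) (fun y => v y t0) S.Q :=
      hVsm.comp ((contDiff_id.prodMk contDiff_const).contDiffOn) hmap
    -- time derivative inequality at the max
    have hmaxt : ∀ t ∈ Icc (0:ℝ) t0, u x0 t - v x0 t - ε * t
        ≤ u x0 t0 - v x0 t0 - ε * t0 := by
      intro t ht
      exact hmax' x0 hx0cl t ⟨ht.1, ht.2.trans ht0.2⟩
    have hder : HasDerivAt (fun t => u x0 t - v x0 t - ε * t)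
        (deriv (u x0) t0 - deriv (v x0) t0 - ε) t0 := by
      have h1 : HasDerivAt (fun t : ℝ => ε * t) ε t0 := by
        simpa using (hasDerivAt_id t0).const_mul ε
      exact (hUt.hasDerivAt.sub hVt.hasDerivAt).sub h1
    have htime : 0 ≤ deriv (u x0) t0 - deriv (v x0) t0 - ε :=
      deriv_nonneg_of_left_max ht0pos hder hmaxt
    -- PDE subtraction
    have hpde : deriv (u x0) t0 - deriv (v x0) t0
        = Gop S.alp (fun y => u y t0) x0 - Gop S.alp (fun y => v y t0) x0 := by
      rw [hUpde x0 hx0Q t0 ⟨ht0pos, ht0.2.trans hT'lt.le⟩,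
        hVpde x0 hx0Q t0 ⟨ht0pos, ht0.2.trans hT'lt.le⟩]
      ring
    -- spatial local max of the difference
    have hd_sm : ContDiffOn ℝ (⊤ : ℕ∞) (fun y => u y t0 - v y t0) S.Q := hu'sm.sub hv'sm
    have hlocmax : IsLocalMax (fun y => u y t0 - v y t0) x0 := by
      filter_upwards [hQopen.mem_nhds hx0Q] with y hy
      have h := hmax' y (subset_closure hy) t0 ht0
      show u y t0 - v y t0 ≤ u x0 t0 - v x0 t0
      linarith
    -- gradient equality
    have hdud : DifferentiableAt ℝ (fun y => u y t0) x0 :=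
      diffAt_of_contDiffOn hQopen hu'sm hx0Q
    have hdvd : DifferentiableAt ℝ (fun y => v y t0) x0 :=
      diffAt_of_contDiffOn hQopen hv'sm hx0Q
    have hgradeq : ∀ i, pd (fun y => u y t0) i x0 = pd (fun y => v y t0) i x0 := by
      intro i
      have h0 : fderiv ℝ (fun y => u y t0 - v y t0) x0 = 0 := hlocmax.fderiv_eq_zero
      rw [fderiv_fun_sub hdud hdvd] at h0
      have := congrArg (fun L : En n →L[ℝ] ℝ => L (EuclideanSpace.single i 1)) h0
      simp only [ContinuousLinearMap.sub_apply, ContinuousLinearMap.zero_apply] at this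
      have h1 : pd (fun y => u y t0) i x0 - pd (fun y => v y t0) i x0 = 0 := this
      linarith
    have hVeq : graphV (fun y => u y t0) x0 = graphV (fun y => v y t0) x0 := by
      unfold graphV gradNormSq
      congr 2
      exact Finset.sum_congr rfl fun i _ => by rw [hgradeq i]
    -- second order information
    have hdquad : ∀ q : En n,
        ∑ i : Fin n, ∑ j : Fin n, q i * (q j * pd2 (fun y => u y t0 - v y t0) i j x0) ≤ 0 := by
      intro q
      rw [← quadform_line hQopen hd_sm hx0Q q]
      have hpt : x0 + (0:ℝ) • q = x0 := by simp
      have hcont : Continuous (fun s : ℝ => x0 + s • q) :=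
        continuous_const.add (continuous_id.smul continuous_const)
      have h0' : Filter.Tendsto (fun s : ℝ => x0 + s • q) (nhds 0) (nhds x0) := by
        have := hcont.continuousAt (x := (0:ℝ))
        rwa [ContinuousAt, hpt] at this
      apply second_deriv_nonpos_of_isLocalMax
      · filter_upwards [h0'.eventually (hQopen.eventually_mem hx0Q)] with s hs
        have hlin : ContDiffAt ℝ (⊤ : ℕ∞) (fun s : ℝ => x0 + s • q) s :=
          (contDiff_const.add (contDiff_id.smul contDiff_const)).contDiffAt
        exact ((hd_sm _ hs).contDiffAt (hQopen.mem_nhds hs)).comp s hlin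
      · have hevmax := h0'.eventually hlocmax
        refine hevmax.mono fun s hs => ?_
        simpa [hpt] using hs
    -- pd2 of the difference
    have hpd2d : ∀ i j, pd2 (fun y => u y t0 - v y t0) i j x0
        = pd2 (fun y => u y t0) i j x0 - pd2 (fun y => v y t0) i j x0 := by
      intro i j
      have hpdd : (fun y => pd (fun z => u z t0 - v z t0) i y)
          =ᶠ[nhds x0] fun y => pd (fun z => u z t0) i y - pd (fun z => v z t0) i y := by
        filter_upwards [hQopen.mem_nhds hx0Q] with y hy
        have h1 : DifferentiableAt ℝ (fun z => u z t0) y :=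
          diffAt_of_contDiffOn hQopen hu'sm hy
        have h2 : DifferentiableAt ℝ (fun z => v z t0) y :=
          diffAt_of_contDiffOn hQopen hv'sm hy
        show fderiv ℝ (fun z => u z t0 - v z t0) y (EuclideanSpace.single i 1) = _
        rw [fderiv_fun_sub h1 h2]
        rfl
      have hstep : pd2 (fun y => u y t0 - v y t0) i j x0
          = fderiv ℝ (fun y => pd (fun z => u z t0) i y - pd (fun z => v z t0) i y) x0
              (EuclideanSpace.single j 1) := by
        show fderiv ℝ (fun y => pd (fun z => u z t0 - v z t0) i y) x0
            (EuclideanSpace.single j 1) = _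
        rw [hpdd.fderiv_eq]
      rw [hstep, fderiv_fun_sub (diffAt_pd hQopen hu'sm hx0Q i) (diffAt_pd hQopen hv'sm hx0Q i)]
      rfl
    -- the PSD matrix N
    set N : Fin n → Fin n → ℝ := fun i j =>
      pd2 (fun y => v y t0) i j x0 - pd2 (fun y => u y t0) i j x0 with hNdef
    have hkey : ∀ i j : Fin n, ∀ a b : ℝ,
        0 ≤ N i i * a ^ 2 + (N i j + N j i) * (a * b) + N j j * b ^ 2 := by
      intro i j a b
      set q : En n := (WithLp.equiv 2 (Fin n → ℝ)).symm
        (fun k => a * (if k = i then 1 else 0) + b * (if k = j then 1 else 0)) with hqdef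
      have hq := hdquad q
      have hqk : ∀ k, q k = a * (if k = i then 1 else 0) + b * (if k = j then 1 else 0) :=
        fun k => rfl
      have hrw : ∑ i' : Fin n, ∑ j' : Fin n,
          q i' * (q j' * pd2 (fun y => u y t0 - v y t0) i' j' x0)
          = -(N i i * a ^ 2 + (N i j + N j i) * (a * b) + N j j * b ^ 2) := by
        have hsplit : ∀ i' j' : Fin n,
            q i' * (q j' * pd2 (fun y => u y t0 - v y t0) i' j' x0)
            = (a*a) * ((if i' = i then (1:ℝ) else 0) * ((if j' = i then (1:ℝ) else 0) *
                (-(N i' j'))))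
              + ((a*b) * ((if i' = i then (1:ℝ) else 0) * ((if j' = j then (1:ℝ) else 0) *
                (-(N i' j'))))
              + ((b*a) * ((if i' = j then (1:ℝ) else 0) * ((if j' = i then (1:ℝ) else 0) *
                (-(N i' j'))))
              + (b*b) * ((if i' = j then (1:ℝ) else 0) * ((if j' = j then (1:ℝ) else 0) *
                (-(N i' j')))))) := by
          intro i' j'
          rw [hqk i', hqk j', hpd2d i' j']
          simp only [hNdef]
          ring
        calc ∑ i' : Fin n, ∑ j' : Fin n,
            q i' * (q j' * pd2 (fun y => u y t0 - v y t0) i' j' x0)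
            = ∑ i' : Fin n, ∑ j' : Fin n, ((a*a) * ((if i' = i then (1:ℝ) else 0) *
                ((if j' = i then (1:ℝ) else 0) * (-(N i' j'))))
              + ((a*b) * ((if i' = i then (1:ℝ) else 0) * ((if j' = j then (1:ℝ) else 0) *
                (-(N i' j'))))
              + ((b*a) * ((if i' = j then (1:ℝ) else 0) * ((if j' = i then (1:ℝ) else 0) *
                (-(N i' j'))))
              + (b*b) * ((if i' = j then (1:ℝ) else 0) * ((if j' = j then (1:ℝ) else 0) *
                (-(N i' j'))))))) :=
              Finset.sum_congr rfl fun i' _ => Finset.sum_congr rfl fun j' _ => hsplit i' j'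
          _ = (a*a) * (-(N i i)) + ((a*b) * (-(N i j)) + ((b*a) * (-(N j i))
              + (b*b) * (-(N j j)))) := by
            rw [← collapse_c (a*a) (fun i' j' => -(N i' j')) i i,
              ← collapse_c (a*b) (fun i' j' => -(N i' j')) i j,
              ← collapse_c (b*a) (fun i' j' => -(N i' j')) j i,
              ← collapse_c (b*b) (fun i' j' => -(N i' j')) j j]
            rw [← Finset.sum_add_distrib, ← Finset.sum_add_distrib, ← Finset.sum_add_distrib]
            exact Finset.sum_congr rfl fun i' _ => by
              rw [← Finset.sum_add_distrib, ← Finset.sum_add_distrib,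
                ← Finset.sum_add_distrib]
          _ = -(N i i * a ^ 2 + (N i j + N j i) * (a * b) + N j j * b ^ 2) := by ring
      rw [hrw] at hq
      linarith
    -- mean curvature comparison
    have hHle : meanCurv (fun y => u y t0) x0 ≤ meanCurv (fun y => v y t0) x0 := by
      rw [meanCurv_formula hQopen hu'sm hx0Q, meanCurv_formula hQopen hv'sm hx0Q]
      have hVu := graphV_pos (fun y => u y t0) x0
      have hVrw : graphV (fun y => v y t0) x0 = graphV (fun y => u y t0) x0 := hVeq.symm
      rw [hVrw]
      set V := graphV (fun y => u y t0) x0 with hVdef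
      set p : Fin n → ℝ := fun i => pd (fun y => u y t0) i x0 with hpdef
      have hPsum : ∑ i : Fin n, ∑ j : Fin n,
          pd (fun y => v y t0) i x0 * (pd (fun y => v y t0) j x0 *
            pd2 (fun y => v y t0) j i x0)
          = ∑ i : Fin n, ∑ j : Fin n, p i * (p j * pd2 (fun y => v y t0) j i x0) :=
        Finset.sum_congr rfl fun i _ => Finset.sum_congr rfl fun j _ => by
          rw [← hgradeq i, ← hgradeq j]
      rw [hPsum]
      -- apply psd bound to transpose of N
      have hNT := psd_quad_bound (fun i j => N j i) (fun i j a b => by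
        have := hkey j i b a
        calc (0:ℝ) ≤ N j j * b ^ 2 + (N j i + N i j) * (b * a) + N i i * a ^ 2 := this
          _ = N i i * a ^ 2 + (N j i + N i j) * (a * b) + N j j * b ^ 2 := by ring) p
      have htr : 0 ≤ ∑ i : Fin n, N i i :=
        Finset.sum_nonneg fun i _ => by
          have := hkey i i 1 0; simpa using this
      have hV2 : V ^ 2 = 1 + ∑ i : Fin n, p i ^ 2 := by
        rw [hVdef, graphV_sq]
        rfl
      have hPnn : 0 ≤ ∑ i : Fin n, p i ^ 2 := Finset.sum_nonneg fun i _ => sq_nonneg _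
      -- abbreviations
      set Au := ∑ i : Fin n, pd2 (fun y => u y t0) i i x0 with hAudef
      set Av := ∑ i : Fin n, pd2 (fun y => v y t0) i i x0 with hAvdef
      set Bu := ∑ i : Fin n, ∑ j : Fin n, p i * (p j * pd2 (fun y => u y t0) j i x0)
        with hBudef
      set Bv := ∑ i : Fin n, ∑ j : Fin n, p i * (p j * pd2 (fun y => v y t0) j i x0)
        with hBvdef
      have hAvAu : Av - Au = ∑ i : Fin n, N i i := by
        rw [hAvdef, hAudef, ← Finset.sum_sub_distrib]
      have hBvBu : Bv - Bu = ∑ i : Fin n, ∑ j : Fin n, p i * p j * N j i := by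
        rw [hBvdef, hBudef, ← Finset.sum_sub_distrib]
        exact Finset.sum_congr rfl fun i _ => by
          rw [← Finset.sum_sub_distrib]
          exact Finset.sum_congr rfl fun j _ => by simp only [hNdef]; ring
      have hSNT : Bv - Bu ≤ (∑ i : Fin n, p i ^ 2) * ∑ i : Fin n, N i i := by
        rw [hBvBu]
        exact hNT
      have hV3 : (0:ℝ) < V ^ 3 := by positivity
      have hdiff : Av / V - Bv / V ^ 3 - (Au / V - Bu / V ^ 3)
          = ((Av - Au) * V ^ 2 - (Bv - Bu)) / V ^ 3 := by
        field_simp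
        ring
      have hnum : 0 ≤ (Av - Au) * V ^ 2 - (Bv - Bu) := by
        rw [hAvAu, hV2]
        nlinarith [hSNT, htr, hAvAu]
      have : 0 ≤ Av / V - Bv / V ^ 3 - (Au / V - Bu / V ^ 3) := by
        rw [hdiff]
        exact div_nonneg hnum hV3.le
      linarith
    -- Gop comparison
    have hHu : 0 < meanCurv (fun y => u y t0) x0 :=
      hUH t0 ⟨ht0.1, ht0T.le⟩ x0 hx0cl
    have hGle : Gop S.alp (fun y => u y t0) x0 ≤ Gop S.alp (fun y => v y t0) x0 := by
      unfold Gop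
      rw [hVeq]
      apply mul_le_mul_of_nonneg_left _ (graphV_pos (fun y => v y t0) x0).le
      exact Real.rpow_le_rpow hHu.le hHle (S.halp_pos x0 hx0cl).le
    rw [hpde] at htime
    linarith
  -- Extension to all of [0, T]
  intro x hx t ht
  have ht0 : ∀ s ∈ Ico (0:ℝ) T, u x s ≤ v x s := by
    intro s hs
    rcases hs.1.lt_or_eq with h | h
    · have hmid : (s + T)/2 < T := by linarith [hs.2]
      have hmidpos : 0 < (s + T)/2 := by linarith
      exact key ((s + T)/2) hmidpos hmid x hx s ⟨hs.1, by linarith [hs.2]⟩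
    · rw [← h, hUic x hx, hVic x hx]
  rcases ht.2.lt_or_eq with h | h
  · exact ht0 t ⟨ht.1, h⟩
  · -- t = T: take limits
    subst h
    have hmap : MapsTo (fun s : ℝ => (x, s)) (Icc 0 t) (closure S.Q ×ˢ Icc 0 t) :=
      fun s hs => ⟨hx, hs⟩
    have hcont : ContinuousOn (fun s => u x s - v x s) (Icc 0 t) := by
      have h1 : ContinuousOn (fun s : ℝ => (x, s)) (Icc 0 t) :=
        (continuous_const.prodMk continuous_id).continuousOn
      exact ((hUsm.continuousOn.comp h1 hmap).sub (hVsm.continuousOn.comp h1 hmap))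
    have hne : (nhdsWithin t (Ico 0 t)).NeBot := by
      apply mem_closure_iff_nhdsWithin_neBot.1
      rw [closure_Ico (ne_of_lt hT)]
      exact ⟨hT.le, le_rfl⟩
    have htends : Filter.Tendsto (fun s => u x s - v x s) (nhdsWithin t (Ico 0 t))
        (nhds (u x t - v x t)) := by
      have := (hcont t (right_mem_Icc.2 hT.le)).tendsto
      exact this.mono_left (nhdsWithin_mono _ Ico_subset_Icc_self)
    have hle : u x t - v x t ≤ 0 := by
      refine le_of_tendsto htends ?_
      filter_upwards [self_mem_nhdsWithin] with s hs
      have := ht0 s hs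
      linarith
    linarith

/-- Uniqueness of solutions of the auxiliary problem. -/
theorem aux_problem_uniqueness (n : ℕ) (S : AuxSetting n) (T : ℝ) (hT : 0 < T)
    (u v : En n → ℝ → ℝ) (hu : IsAuxSolution S T u) (hv : IsAuxSolution S T v) :
    ∀ x ∈ closure S.Q, ∀ t ∈ Set.Icc (0:ℝ) T, u x t = v x t := by
  intro x hx t ht
  exact le_antisymm (aux_le S T hT u v hu hv x hx t ht)
    (aux_le S T hT v u hv hu x hx t ht)
end
end

section
/- Under the auxiliary problem setting, every solution u of the auxiliary problem on [0,T] (T > 0 arbitrary) satisfies u₀(x) ≤ u(x,t) − c·t ≤ 0 for all (x,t) ∈ closure(Q) × [0,T]. -/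
noncomputable section
open Set

namespace AuxPf

variable {n : ℕ}

/-- Hessian matrix entries. -/
def Hess (f : En n → ℝ) (x : En n) (i j : Fin n) : ℝ :=
  (fderiv ℝ (fderiv ℝ f) x (EuclideanSpace.single j 1)) (EuclideanSpace.single i 1)

lemma euclid_decomp (a : En n) : a = ∑ j, a j • EuclideanSpace.single j (1:ℝ) := by
  ext k
  rw [show ((∑ x : Fin n, a x • EuclideanSpace.single x (1:ℝ)) k)
      = ∑ x : Fin n, (a x • EuclideanSpace.single x (1:ℝ)) k from
    by rw [WithLp.ofLp_sum, Finset.sum_apply]]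
  simp [EuclideanSpace.single_apply]

lemma hasFDerivAt_pd {f : En n → ℝ} {x₀ : En n} (hf : ContDiffAt ℝ (⊤ : ℕ∞) f x₀) (i : Fin n) :
    HasFDerivAt (pd f i)
      ((ContinuousLinearMap.apply ℝ ℝ (EuclideanSpace.single i (1:ℝ))).comp
        (fderiv ℝ (fderiv ℝ f) x₀)) x₀ := by
  have hF : ContDiffAt ℝ 1 (fderiv ℝ f) x₀ := hf.fderiv_right (WithTop.coe_le_coe.2 le_top)
  have hFd : DifferentiableAt ℝ (fderiv ℝ f) x₀ := hF.differentiableAt one_ne_zero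
  exact (ContinuousLinearMap.apply ℝ ℝ (EuclideanSpace.single i (1:ℝ))).hasFDerivAt.comp x₀
    hFd.hasFDerivAt

lemma fderiv_pd_apply {f : En n → ℝ} {x₀ : En n} (hf : ContDiffAt ℝ (⊤ : ℕ∞) f x₀) (i : Fin n)
    (b : En n) :
    fderiv ℝ (pd f i) x₀ b = (fderiv ℝ (fderiv ℝ f) x₀ b) (EuclideanSpace.single i 1) := by
  rw [(hasFDerivAt_pd hf i).fderiv]; rfl

lemma fderiv_pd_single {f : En n → ℝ} {x₀ : En n} (hf : ContDiffAt ℝ (⊤ : ℕ∞) f x₀) (i j : Fin n) :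
    fderiv ℝ (pd f i) x₀ (EuclideanSpace.single j 1) = Hess f x₀ i j :=
  fderiv_pd_apply hf i _

/-- Bilinear expansion of the second derivative. -/
lemma second_fderiv_expand (f : En n → ℝ) (x₀ : En n) (a : En n) :
    (fderiv ℝ (fderiv ℝ f) x₀ a) a = ∑ i, ∑ j, a i * a j * Hess f x₀ i j := by
  set L := fderiv ℝ (fderiv ℝ f) x₀ with hL
  have h1 : L a = ∑ j, a j • L (EuclideanSpace.single j 1) := by
    conv_lhs => rw [euclid_decomp a]
    rw [map_sum]
    exact Finset.sum_congr rfl fun j _ => by rw [map_smul]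
  have h2 : ∀ j, (L (EuclideanSpace.single j 1)) a
      = ∑ i, a i * (L (EuclideanSpace.single j 1)) (EuclideanSpace.single i 1) := by
    intro j
    conv_lhs => rw [euclid_decomp a]
    rw [map_sum]
    exact Finset.sum_congr rfl fun i _ => by rw [map_smul]; rfl
  rw [h1]
  calc (∑ j, a j • L (EuclideanSpace.single j 1)) a
      = ∑ j, a j * (L (EuclideanSpace.single j 1)) a := by
        rw [ContinuousLinearMap.sum_apply]
        exact Finset.sum_congr rfl fun j _ => rfl
    _ = ∑ j, ∑ i, a j * (a i * Hess f x₀ i j) := by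
        refine Finset.sum_congr rfl fun j _ => ?_
        rw [h2, Finset.mul_sum]
        simp only [Hess, ← hL]
    _ = ∑ i, ∑ j, a i * a j * Hess f x₀ i j := by
        rw [Finset.sum_comm]
        exact Finset.sum_congr rfl fun i _ => Finset.sum_congr rfl fun j _ => by ring

/-- Second derivative test: the Hessian quadratic form is PSD at a local min. -/
theorem hessian_psd_of_isLocalMin {f : En n → ℝ} {x₀ : En n} (hf : ContDiffAt ℝ (⊤ : ℕ∞) f x₀)
    (hmin : IsLocalMin f x₀) (a : En n) :
    0 ≤ ∑ i, ∑ j, a i * a j * Hess f x₀ i j := by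
  by_contra hneg
  push_neg at hneg
  set Q : ℝ := (fderiv ℝ (fderiv ℝ f) x₀ a) a with hQdef
  have hQ : Q < 0 := by rw [hQdef, second_fderiv_expand]; exact hneg
  -- a neighborhood where f is smooth
  obtain ⟨U, hU_mem, hUf⟩ := hf.contDiffOn (m := 2) (WithTop.coe_le_coe.2 le_top) (by simp)
  obtain ⟨V, hVU, hVopen, hV0⟩ := mem_nhds_iff.1 hU_mem
  have hdiff : ∀ y ∈ V, DifferentiableAt ℝ f y := fun y hy =>
    ((hUf.mono hVU).differentiableOn (by norm_num)).differentiableAt (hVopen.mem_nhds hy)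
  -- line and directional derivative along it
  set ℓ : ℝ → En n := fun s => x₀ + s • a with hℓ
  have hℓ0 : ℓ 0 = x₀ := by simp [hℓ]
  have hℓcont : Continuous ℓ := by continuity
  have hℓd : ∀ s : ℝ, HasDerivAt ℓ a s := by
    intro s
    have : HasDerivAt (fun τ : ℝ => τ • a) ((1:ℝ) • a) s := (hasDerivAt_id s).smul_const a
    simpa [hℓ, one_smul] using this.const_add x₀
  set g : ℝ → ℝ := fun s => f (ℓ s) with hg
  set G : ℝ → ℝ := fun s => (fderiv ℝ f (ℓ s)) a with hG
  set W : Set ℝ := ℓ ⁻¹' V with hW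
  have hWopen : IsOpen W := hVopen.preimage hℓcont
  have hW0 : (0:ℝ) ∈ W := by rw [hW, mem_preimage, hℓ0]; exact hV0
  have claim1 : ∀ s ∈ W, HasDerivAt g (G s) s := fun s hs =>
    (hdiff _ hs).hasFDerivAt.comp_hasDerivAt s (hℓd s)
  -- derivative of G at 0 is Q
  have hFd : DifferentiableAt ℝ (fderiv ℝ f) x₀ :=
    (hf.fderiv_right (WithTop.coe_le_coe.2 le_top)).differentiableAt one_ne_zero
  have hcomp : HasDerivAt (fun s => fderiv ℝ f (ℓ s)) (fderiv ℝ (fderiv ℝ f) x₀ a) 0 := by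
    have h0 : HasFDerivAt (fderiv ℝ f) (fderiv ℝ (fderiv ℝ f) x₀) (ℓ 0) := by
      rw [hℓ0]; exact hFd.hasFDerivAt
    exact h0.comp_hasDerivAt 0 (hℓd 0)
  have claim2 : HasDerivAt G Q 0 := by
    have := hcomp.clm_apply (hasDerivAt_const 0 a)
    simpa [hQdef] using this
  have hG0 : G 0 = 0 := by
    rw [hG]; simp only [hℓ0]
    rw [hmin.fderiv_eq_zero]; rfl
  -- extract smallness: slope of G near 0 is negative
  have hslope : Filter.Tendsto (slope G 0) (nhdsWithin 0 {(0:ℝ)}ᶜ) (nhds Q) :=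
    hasDerivAt_iff_tendsto_slope.1 claim2
  have hev1 : ∀ᶠ s in nhdsWithin 0 {(0:ℝ)}ᶜ, slope G 0 s < 0 :=
    hslope.eventually_lt_const hQ
  have hev2 : ∀ᶠ s in nhdsWithin 0 {(0:ℝ)}ᶜ, s ∈ W :=
    Filter.eventually_iff_exists_mem.2 ⟨{(0:ℝ)}ᶜ ∩ W,
      inter_mem_nhdsWithin _ (hWopen.mem_nhds hW0), fun s hs => hs.2⟩
  obtain ⟨δ, hδpos, hδ⟩ :=
    Metric.eventually_nhds_iff.1 (eventually_nhdsWithin_iff.1 (hev1.and hev2))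
  -- local min pulled back to the line
  have hgmin : IsLocalMin g 0 := by
    have : IsLocalMin f (ℓ 0) := by rwa [hℓ0]
    exact this.comp_continuous hℓcont.continuousAt
  obtain ⟨δ₂, hδ₂pos, hδ₂⟩ := Metric.eventually_nhds_iff.1 hgmin
  -- choose small positive s₁
  set s₁ : ℝ := min δ δ₂ / 2 with hs₁def
  have hs₁pos : 0 < s₁ := by positivity
  have hs₁δ : s₁ < δ := by
    have : min δ δ₂ ≤ δ := min_le_left _ _
    linarith
  have hs₁δ₂ : s₁ < δ₂ := by
    have : min δ δ₂ ≤ δ₂ := min_le_right _ _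
    linarith
  -- on (0, δ), G is negative and membership in W holds
  have hkey : ∀ s : ℝ, 0 < s → s < δ → G s < 0 ∧ s ∈ W := by
    intro s hs0 hsδ
    have hmem : s ∈ ({(0:ℝ)}ᶜ : Set ℝ) := by simp [ne_of_gt hs0]
    have hdist : dist s 0 < δ := by rw [Real.dist_eq, sub_zero, abs_of_pos hs0]; exact hsδ
    obtain ⟨h1, h2⟩ := hδ hdist hmem
    refine ⟨?_, h2⟩
    have hsl : slope G 0 s = G s / s := by
      rw [slope_def_field, hG0, sub_zero, sub_zero]
    rw [hsl] at h1
    rcases div_neg_iff.1 h1 with ⟨_, h⟩ | ⟨h, _⟩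
    · linarith
    · exact h
  -- strict decrease on [0, s₁]
  have hIccW : Icc (0:ℝ) s₁ ⊆ W := by
    intro s hs
    rcases eq_or_lt_of_le hs.1 with h | h
    · rwa [← h]
    · exact (hkey s h (lt_of_le_of_lt hs.2 hs₁δ)).2
  have hanti : StrictAntiOn g (Icc 0 s₁) := by
    apply strictAntiOn_of_deriv_neg (convex_Icc 0 s₁)
    · intro s hs
      exact (claim1 s (hIccW hs)).continuousAt.continuousWithinAt
    · intro s hs
      rw [interior_Icc] at hs
      rw [(claim1 s (hIccW ⟨hs.1.le, hs.2.le⟩)).deriv]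
      exact (hkey s hs.1 (lt_trans hs.2 hs₁δ)).1
  have hlt : g s₁ < g 0 :=
    hanti (left_mem_Icc.2 hs₁pos.le) (right_mem_Icc.2 hs₁pos.le) hs₁pos
  have hge : g 0 ≤ g s₁ := by
    apply hδ₂
    rw [Real.dist_eq, sub_zero, abs_of_pos hs₁pos]
    exact hs₁δ₂
  linarith

lemma gradNormSq_nonneg (f : En n → ℝ) (x : En n) : 0 ≤ gradNormSq f x :=
  Finset.sum_nonneg fun _ _ => sq_nonneg _

lemma graphV_pos (f : En n → ℝ) (x : En n) : 0 < graphV f x :=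
  Real.sqrt_pos.2 (by linarith [gradNormSq_nonneg f x])

lemma graphV_sq (f : En n → ℝ) (x : En n) : graphV f x ^ 2 = 1 + gradNormSq f x :=
  Real.sq_sqrt (by linarith [gradNormSq_nonneg f x])

lemma hasFDerivAt_graphV {f : En n → ℝ} {x₀ : En n} (hf : ContDiffAt ℝ (⊤ : ℕ∞) f x₀) :
    HasFDerivAt (graphV f)
      ((1 / (2 * graphV f x₀)) •
        ∑ j, (2 * pd f j x₀) • fderiv ℝ (pd f j) x₀) x₀ := by
  have hD : ∀ j, HasFDerivAt (pd f j) (fderiv ℝ (pd f j) x₀) x₀ := fun j =>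
    (hasFDerivAt_pd hf j).differentiableAt.hasFDerivAt
  have hsum : HasFDerivAt (gradNormSq f)
      (∑ j, (2 * pd f j x₀) • fderiv ℝ (pd f j) x₀) x₀ := by
    have : ∀ j : Fin n, HasFDerivAt (fun y => pd f j y ^ 2)
        ((2 * pd f j x₀) • fderiv ℝ (pd f j) x₀) x₀ := by
      intro j
      have h2 := (hD j).mul (hD j)
      have hfn : (fun y => pd f j y ^ 2) = fun y => pd f j y * pd f j y := by
        funext y; ring
      rw [hfn, two_mul, add_smul]
      exact h2
    exact HasFDerivAt.fun_sum fun j _ => this j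
  have hw : HasFDerivAt (fun y => 1 + gradNormSq f y)
      (∑ j, (2 * pd f j x₀) • fderiv ℝ (pd f j) x₀) x₀ := hsum.const_add 1
  have hne : 1 + gradNormSq f x₀ ≠ 0 := by linarith [gradNormSq_nonneg f x₀]
  have hsqrt : HasDerivAt Real.sqrt (1 / (2 * Real.sqrt (1 + gradNormSq f x₀)))
      (1 + gradNormSq f x₀) := Real.hasDerivAt_sqrt hne
  exact hsqrt.comp_hasFDerivAt x₀ hw

lemma fderiv_graphV_single {f : En n → ℝ} {x₀ : En n} (hf : ContDiffAt ℝ (⊤ : ℕ∞) f x₀) (i : Fin n) :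
    fderiv ℝ (graphV f) x₀ (EuclideanSpace.single i 1)
      = (∑ j, pd f j x₀ * Hess f x₀ j i) / graphV f x₀ := by
  rw [(hasFDerivAt_graphV hf).fderiv]
  rw [ContinuousLinearMap.smul_apply, ContinuousLinearMap.sum_apply]
  have : ∀ j : Fin n, ((2 * pd f j x₀) • fderiv ℝ (pd f j) x₀) (EuclideanSpace.single i 1)
      = 2 * (pd f j x₀ * Hess f x₀ j i) := by
    intro j
    rw [ContinuousLinearMap.smul_apply, fderiv_pd_single hf j i]
    simp [smul_eq_mul]; ring
  rw [Finset.sum_congr rfl fun j _ => this j, ← Finset.mul_sum]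
  have hv := (graphV_pos f x₀).ne'
  field_simp
  simp only [smul_eq_mul]; field_simp

lemma pd_quot {f : En n → ℝ} {x₀ : En n} (hf : ContDiffAt ℝ (⊤ : ℕ∞) f x₀) (i : Fin n) :
    pd (fun y => pd f i y / graphV f y) i x₀
      = Hess f x₀ i i / graphV f x₀
        - pd f i x₀ * (∑ j, pd f j x₀ * Hess f x₀ j i) / graphV f x₀ ^ 3 := by
  have hv : 0 < graphV f x₀ := graphV_pos f x₀
  have hV := hasFDerivAt_graphV hf
  have hVd : HasFDerivAt (graphV f) (fderiv ℝ (graphV f) x₀) x₀ :=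
    hV.differentiableAt.hasFDerivAt
  have hInv : HasFDerivAt (fun y => (graphV f y)⁻¹)
      ((ContinuousLinearMap.smulRight (1 : ℝ →L[ℝ] ℝ) (-(graphV f x₀ ^ 2)⁻¹)).comp
        (fderiv ℝ (graphV f) x₀)) x₀ :=
    (hasFDerivAt_inv hv.ne').comp x₀ hVd
  have hD : HasFDerivAt (pd f i) (fderiv ℝ (pd f i) x₀) x₀ :=
    (hasFDerivAt_pd hf i).differentiableAt.hasFDerivAt
  have hq := hD.fun_mul hInv
  have hfun : (fun y => pd f i y / graphV f y) = fun y => pd f i y * (graphV f y)⁻¹ := by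
    funext y; rw [div_eq_mul_inv]
  rw [pd, hfun, hq.fderiv]
  rw [ContinuousLinearMap.add_apply, ContinuousLinearMap.smul_apply,
    ContinuousLinearMap.smul_apply, ContinuousLinearMap.comp_apply,
    ContinuousLinearMap.smulRight_apply, fderiv_pd_single hf i i,
    fderiv_graphV_single hf i]
  simp only [smul_eq_mul, ContinuousLinearMap.one_apply]
  field_simp
  ring

theorem meanCurv_formula {f : En n → ℝ} {x₀ : En n} (hf : ContDiffAt ℝ (⊤ : ℕ∞) f x₀) :
    meanCurv f x₀ = (∑ i, Hess f x₀ i i) / graphV f x₀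
      - (∑ i, ∑ j, pd f i x₀ * pd f j x₀ * Hess f x₀ j i) / graphV f x₀ ^ 3 := by
  rw [meanCurv, Finset.sum_congr rfl fun i _ => pd_quot hf i]
  rw [Finset.sum_sub_distrib, ← Finset.sum_div, ← Finset.sum_div]
  congr 2
  refine Finset.sum_congr rfl fun i _ => ?_
  rw [Finset.mul_sum]
  exact Finset.sum_congr rfl fun j _ => by ring

open Finset in
/-- If the quadratic form of `S` is PSD, then `pᵀSp ≤ |p|² tr S`. -/
theorem qform_bound {n : ℕ} (S : Fin n → Fin n → ℝ)
    (hq : ∀ a : Fin n → ℝ, 0 ≤ ∑ i, ∑ j, a i * a j * S i j) (p : Fin n → ℝ) :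
    ∑ i, ∑ j, p i * p j * S i j ≤ (∑ i, p i ^ 2) * (∑ i, S i i) := by
  -- diagonal entries are nonneg
  have hdiag : ∀ i, 0 ≤ S i i := by
    intro i
    have := hq (fun k => if i = k then (1:ℝ) else 0)
    simpa [ite_mul, mul_ite, Finset.sum_ite_eq, Finset.sum_ite_eq'] using this
  -- pairwise Cauchy-Schwarz
  have hpair : ∀ i j, |S i j + S j i| ≤ 2 * Real.sqrt (S i i) * Real.sqrt (S j j) := by
    intro i j
    have key : ∀ x : ℝ, 0 ≤ S i i * (x * x) + (S i j + S j i) * x + S j j := by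
      intro x
      have h0 := hq (fun k => x * (if i = k then (1:ℝ) else 0) + (if j = k then (1:ℝ) else 0))
      have expand : ∑ k, ∑ l, (x * (if i = k then (1:ℝ) else 0) + (if j = k then (1:ℝ) else 0)) *
          ((x * (if i = l then (1:ℝ) else 0) + (if j = l then (1:ℝ) else 0))) * S k l
          = S i i * (x * x) + (S i j + S j i) * x + S j j := by
        simp only [ite_mul, mul_ite, mul_one, mul_zero, zero_mul, one_mul,
          add_mul, mul_add, Finset.sum_add_distrib, Finset.sum_ite_eq, Finset.sum_ite_eq',
          Finset.mem_univ, if_true]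
        ring
      rw [expand] at h0
      linarith
    have hd := discrim_le_zero key
    unfold discrim at hd
    have hsq : (S i j + S j i) ^ 2 ≤ (2 * Real.sqrt (S i i) * Real.sqrt (S j j)) ^ 2 := by
      have : (2 * Real.sqrt (S i i) * Real.sqrt (S j j)) ^ 2 = 4 * (S i i) * (S j j) := by
        rw [mul_pow, mul_pow, Real.sq_sqrt (hdiag i), Real.sq_sqrt (hdiag j)]; ring
      rw [this]; linarith
    calc |S i j + S j i| = Real.sqrt ((S i j + S j i) ^ 2) := (Real.sqrt_sq_eq_abs _).symm
      _ ≤ Real.sqrt ((2 * Real.sqrt (S i i) * Real.sqrt (S j j)) ^ 2) := Real.sqrt_le_sqrt hsq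
      _ = 2 * Real.sqrt (S i i) * Real.sqrt (S j j) := Real.sqrt_sq (by positivity)
  -- main estimate
  have step1 : ∑ i, ∑ j, p i * p j * S i j ≤ (∑ i, |p i| * Real.sqrt (S i i)) ^ 2 := by
    have e1 : ∀ i j : Fin n, p i * p j * ((S i j + S j i)/2)
        = (p i * p j * S i j)/2 + (p i * p j * S j i)/2 := by intro i j; ring
    have swap : ∑ i, ∑ j, p i * p j * S i j = ∑ i, ∑ j, p i * p j * S j i := by
      rw [Finset.sum_comm]
      congr 1; ext i; congr 1; ext j; ring
    have this1 : ∑ i, ∑ j, p i * p j * S i j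
        = ∑ i, ∑ j, (p i * p j) * ((S i j + S j i) / 2) := by
      simp_rw [e1, Finset.sum_add_distrib, ← Finset.sum_div]
      linarith [swap]
    rw [this1, sq, Finset.sum_mul_sum]
    apply Finset.sum_le_sum; intro i _
    apply Finset.sum_le_sum; intro j _
    have h2 : (p i * p j) * ((S i j + S j i) / 2) ≤ |p i * p j| * |(S i j + S j i) / 2| := by
      calc (p i * p j) * ((S i j + S j i) / 2) ≤ |(p i * p j) * ((S i j + S j i) / 2)| :=
            le_abs_self _
        _ = |p i * p j| * |(S i j + S j i) / 2| := abs_mul _ _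
    have h1 : (p i * p j) * ((S i j + S j i) / 2)
        ≤ |p i * p j| * (Real.sqrt (S i i) * Real.sqrt (S j j)) := by
      refine h2.trans (mul_le_mul_of_nonneg_left ?_ (abs_nonneg _))
      rw [abs_div, abs_two, div_le_iff₀ (by norm_num : (0:ℝ) < 2)]
      have := hpair i j; linarith
    calc (p i * p j) * ((S i j + S j i) / 2)
        ≤ |p i * p j| * (Real.sqrt (S i i) * Real.sqrt (S j j)) := h1
      _ = (|p i| * Real.sqrt (S i i)) * (|p j| * Real.sqrt (S j j)) := by
          rw [abs_mul]; ring
  refine step1.trans ?_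
  exact Finset.sum_sq_le_sum_mul_sum_of_sq_eq_mul _
    (fun i _ => sq_nonneg _) (fun i _ => hdiag i)
    (fun i _ => by rw [mul_pow, sq_abs, Real.sq_sqrt (hdiag i)])

lemma pd_const (b : ℝ) (i : Fin n) (y : En n) : pd (fun _ => b) i y = 0 := by
  simp [pd]

lemma meanCurv_const (b : ℝ) (x : En n) : meanCurv (fun _ : En n => b) x = 0 := by
  have h : ∀ i : Fin n,
      (fun y => pd (fun _ : En n => b) i y / graphV (fun _ : En n => b) y)
        = fun _ : En n => (0:ℝ) := by
    intro i; funext y; rw [pd_const, zero_div]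
  rw [meanCurv]
  refine Finset.sum_eq_zero fun i _ => ?_
  rw [h i]
  simp [pd]

/-- The comparison lemma: at a local min of `f - g` with smooth `f, g`,
the graph quantities compare. -/
theorem meanCurv_comparison {f g : En n → ℝ} {x₀ : En n} (hf : ContDiffAt ℝ (⊤ : ℕ∞) f x₀)
    (hg : ContDiffAt ℝ (⊤ : ℕ∞) g x₀) (hmin : IsLocalMin (fun y => f y - g y) x₀) :
    graphV f x₀ = graphV g x₀ ∧ meanCurv g x₀ ≤ meanCurv f x₀ := by
  have hfd : DifferentiableAt ℝ f x₀ := hf.differentiableAt (by simp)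
  have hgd : DifferentiableAt ℝ g x₀ := hg.differentiableAt (by simp)
  have hh : ContDiffAt ℝ (⊤ : ℕ∞) (fun y => f y - g y) x₀ := hf.sub hg
  have hfg : fderiv ℝ f x₀ = fderiv ℝ g x₀ := by
    have h0 := hmin.fderiv_eq_zero
    rw [fderiv_fun_sub hfd hgd] at h0
    exact sub_eq_zero.1 h0
  have hp : ∀ j, pd f j x₀ = pd g j x₀ := fun j => by rw [pd, pd, hfg]
  have hgns : gradNormSq f x₀ = gradNormSq g x₀ := by
    rw [gradNormSq, gradNormSq]
    exact Finset.sum_congr rfl fun j _ => by rw [hp j]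
  have hgv : graphV f x₀ = graphV g x₀ := by rw [graphV, graphV, hgns]
  refine ⟨hgv, ?_⟩
  -- Hessian of the difference
  have hsubH : ∀ i j, Hess (fun y => f y - g y) x₀ i j = Hess f x₀ i j - Hess g x₀ i j := by
    obtain ⟨Uf, hUf_mem, hUf⟩ := hf.contDiffOn (m := 2) (WithTop.coe_le_coe.2 le_top) (by simp)
    obtain ⟨Ug, hUg_mem, hUg⟩ := hg.contDiffOn (m := 2) (WithTop.coe_le_coe.2 le_top) (by simp)
    obtain ⟨Vf, hVfU, hVfo, hVf0⟩ := mem_nhds_iff.1 hUf_mem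
    obtain ⟨Vg, hVgU, hVgo, hVg0⟩ := mem_nhds_iff.1 hUg_mem
    have hEv : (fun y => fderiv ℝ (fun z => f z - g z) y)
        =ᶠ[nhds x₀] fun y => fderiv ℝ f y - fderiv ℝ g y := by
      refine Filter.eventually_of_mem ((hVfo.inter hVgo).mem_nhds ⟨hVf0, hVg0⟩) ?_
      intro y hy
      have h1 : DifferentiableAt ℝ f y :=
        ((hUf.mono hVfU).differentiableOn (by norm_num)).differentiableAt
          (hVfo.mem_nhds hy.1)
      have h2 : DifferentiableAt ℝ g y :=
        ((hUg.mono hVgU).differentiableOn (by norm_num)).differentiableAt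
          (hVgo.mem_nhds hy.2)
      exact fderiv_fun_sub h1 h2
    have hF'd : DifferentiableAt ℝ (fderiv ℝ f) x₀ :=
      (hf.fderiv_right (WithTop.coe_le_coe.2 le_top)).differentiableAt one_ne_zero
    have hG'd : DifferentiableAt ℝ (fderiv ℝ g) x₀ :=
      (hg.fderiv_right (WithTop.coe_le_coe.2 le_top)).differentiableAt one_ne_zero
    have hkey : fderiv ℝ (fderiv ℝ (fun z => f z - g z)) x₀
        = fderiv ℝ (fderiv ℝ f) x₀ - fderiv ℝ (fderiv ℝ g) x₀ := by
      rw [hEv.fderiv_eq, fderiv_fun_sub hF'd hG'd]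
    intro i j
    rw [Hess, Hess, Hess, hkey]
    simp
  -- PSD of the difference Hessian
  set M : Fin n → Fin n → ℝ := fun i j => Hess f x₀ i j - Hess g x₀ i j with hM
  have hpsdM : ∀ a : En n, 0 ≤ ∑ i, ∑ j, a i * a j * M i j := by
    intro a
    have h0 := hessian_psd_of_isLocalMin hh hmin a
    rw [Finset.sum_congr rfl fun i _ => Finset.sum_congr rfl fun j _ => by
      rw [hsubH i j]] at h0
    exact h0
  have htr : 0 ≤ ∑ i, M i i := by
    refine Finset.sum_nonneg fun i _ => ?_
    have h0 := hpsdM (EuclideanSpace.single i 1)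
    simpa [EuclideanSpace.single_apply, ite_mul, mul_ite,
      Finset.sum_ite_eq, Finset.sum_ite_eq'] using h0
  -- qform bound with the transposed matrix
  have hq' : ∀ a : Fin n → ℝ, 0 ≤ ∑ i, ∑ j, a i * a j * M j i := by
    intro a
    have haa : ∀ k, ((WithLp.equiv 2 (Fin n → ℝ)).symm a) k = a k := fun _ => rfl
    calc (0:ℝ) ≤ ∑ i, ∑ j, ((WithLp.equiv 2 (Fin n → ℝ)).symm a) i *
          ((WithLp.equiv 2 (Fin n → ℝ)).symm a) j * M i j :=
            hpsdM ((WithLp.equiv 2 (Fin n → ℝ)).symm a)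
      _ = ∑ i, ∑ j, a i * a j * M j i := by
          rw [Finset.sum_comm]
          exact Finset.sum_congr rfl fun x _ => Finset.sum_congr rfl fun y _ => by
            simp only [haa]; ring
  have hbound := qform_bound (fun i j => M j i) hq' (fun j => pd f j x₀)
  -- put the mean curvature formulas together
  set v : ℝ := graphV f x₀ with hv
  have hvpos : 0 < v := graphV_pos f x₀
  have hsumsq : ∑ i, pd f i x₀ ^ 2 = v ^ 2 - 1 := by
    have := graphV_sq f x₀
    rw [← hv] at this
    rw [show (gradNormSq f x₀ = ∑ i, pd f i x₀ ^ 2) from rfl] at this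
    linarith
  rw [meanCurv_formula hf, meanCurv_formula hg, ← hv, ← hgv]
  have hpg : ∀ i j, pd g i x₀ * pd g j x₀ * Hess g x₀ j i
      = pd f i x₀ * pd f j x₀ * Hess g x₀ j i := fun i j => by rw [hp i, hp j]
  rw [Finset.sum_congr rfl fun i _ => Finset.sum_congr rfl fun j _ => hpg i j]
  -- abbreviations
  set A : ℝ := ∑ i, Hess g x₀ i i with hA
  set B : ℝ := ∑ i, ∑ j, pd f i x₀ * pd f j x₀ * Hess g x₀ j i with hB
  set trM : ℝ := ∑ i, M i i with htrM
  set pMp : ℝ := ∑ i, ∑ j, pd f i x₀ * pd f j x₀ * M j i with hpMp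
  have e1 : ∑ i, Hess f x₀ i i = A + trM := by
    rw [hA, htrM, ← Finset.sum_add_distrib]
    exact Finset.sum_congr rfl fun i _ => by rw [hM]; ring
  have e2 : ∑ i, ∑ j, pd f i x₀ * pd f j x₀ * Hess f x₀ j i = B + pMp := by
    rw [hB, hpMp, ← Finset.sum_add_distrib]
    refine Finset.sum_congr rfl fun i _ => ?_
    rw [← Finset.sum_add_distrib]
    exact Finset.sum_congr rfl fun j _ => by rw [hM]; ring
  rw [e1, e2]
  have hkey : pMp ≤ (v ^ 2 - 1) * trM := by
    rw [← hsumsq]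
    exact hbound
  have hv3 : (0:ℝ) < v ^ 3 := pow_pos hvpos 3
  have hnum : 0 ≤ trM * v ^ 2 - pMp := by nlinarith [hkey, htr]
  have hmain : 0 ≤ trM / v - pMp / v ^ 3 := by
    have heq : trM / v - pMp / v ^ 3 = (trM * v ^ 2 - pMp) / v ^ 3 := by
      field_simp
    rw [heq]
    exact div_nonneg hnum hv3.le
  have hexpand : (A + trM) / v - (B + pMp) / v ^ 3
      = (A / v - B / v ^ 3) + (trM / v - pMp / v ^ 3) := by
    field_simp; ring
  rw [hexpand]
  linarith

/-- If `g` has a derivative at the right endpoint of an interval on which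
`g t₀` is minimal, the derivative is nonpositive. -/
lemma deriv_nonpos_of_left_min {g : ℝ → ℝ} {d t₀ a : ℝ} (hd : HasDerivAt g d t₀)
    (ha : a < t₀) (hmin : ∀ t ∈ Icc a t₀, g t₀ ≤ g t) : d ≤ 0 := by
  have h1 : Filter.Tendsto (slope g t₀) (nhdsWithin t₀ (Iio t₀)) (nhds d) :=
    (hasDerivWithinAt_iff_tendsto_slope' self_notMem_Iio).1 hd.hasDerivWithinAt
  refine le_of_tendsto h1 ?_
  refine Filter.eventually_of_mem (Ioo_mem_nhdsLT_of_mem ⟨ha, le_rfl⟩) ?_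
  intro t htI
  rw [slope_def_field]
  apply div_nonpos_of_nonneg_of_nonpos
  · have := hmin t ⟨htI.1.le, htI.2.le⟩; linarith
  · linarith [htI.2]

end AuxPf



namespace AuxPf

variable {n : ℕ} (S : AuxSetting n)

lemma hQopen : IsOpen S.Q := by
  rw [S.hQdef]
  exact isOpen_lt S.hrho.continuous continuous_const

lemma closure_mem_nhds {x : En n} (hx : x ∈ S.Q) : closure S.Q ∈ nhds x :=
  mem_nhds_iff.2 ⟨S.Q, subset_closure, hQopen S, hx⟩

lemma mem_Q_or_frontier {x : En n} (hx : x ∈ closure S.Q) :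
    x ∈ S.Q ∨ x ∈ frontier S.Q := by
  by_cases h : x ∈ S.Q
  · exact Or.inl h
  · exact Or.inr ⟨hx, by rwa [(hQopen S).interior_eq]⟩

lemma slice_contDiffOn {T : ℝ} {u : En n → ℝ → ℝ}
    (husm : ContDiffOn ℝ (⊤ : ℕ∞) (fun p : En n × ℝ => u p.1 p.2) (closure S.Q ×ˢ Set.Icc 0 T))
    {t : ℝ} (ht : t ∈ Set.Icc (0:ℝ) T) :
    ContDiffOn ℝ (⊤ : ℕ∞) (fun y => u y t) (closure S.Q) := by
  have : (fun y => u y t)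
      = (fun p : En n × ℝ => u p.1 p.2) ∘ (fun y : En n => (y, t)) := rfl
  rw [this]
  exact husm.comp ((contDiff_id.prodMk contDiff_const).contDiffOn)
    (fun y hy => ⟨hy, ht⟩)

/-- Upper bound: `u(x,t) ≤ c·t`. -/
lemma upper_bound {T : ℝ} {u : En n → ℝ → ℝ} (hu : IsAuxSolution S T u)
    {t : ℝ} (ht : t ∈ Set.Icc (0:ℝ) T) {x : En n} (hx : x ∈ closure S.Q) :
    u x t ≤ S.c * t := by
  obtain ⟨husm, huH, hupde, hubdy, huinit⟩ := hu
  have hKc : IsCompact (closure S.Q) := S.hbdd.isCompact_closure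
  set φ : En n → ℝ := fun y => u y t with hφ
  have hφcd : ContDiffOn ℝ (⊤ : ℕ∞) φ (closure S.Q) := slice_contDiffOn S husm ht
  obtain ⟨x', hx', hmax⟩ := hKc.exists_isMaxOn ⟨x, hx⟩ (hφcd.continuousOn)
  rcases mem_Q_or_frontier S hx' with hxQ | hxF
  · exfalso
    have hφat : ContDiffAt ℝ (⊤ : ℕ∞) φ x' := hφcd.contDiffAt (closure_mem_nhds S hxQ)
    have hloc : IsLocalMax φ x' := hmax.isLocalMax (closure_mem_nhds S hxQ)
    have hL : IsLocalMin (fun y => (fun _ : En n => φ x') y - φ y) x' :=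
      Filter.Eventually.mono hloc fun y hy => sub_le_sub_left hy _
    have hcmp := meanCurv_comparison (contDiffAt_const (c := φ x')) hφat hL
    have h0 : meanCurv φ x' ≤ 0 := by
      have := hcmp.2
      rwa [meanCurv_const] at this
    exact absurd (huH t ht x' (subset_closure hxQ)) (by linarith)
  · have h1 : u x t ≤ u x' t := hmax hx
    rwa [hubdy x' hxF t ht] at h1

end AuxPf

namespace AuxPf

lemma lower_claim {n : ℕ} (S : AuxSetting n) {T : ℝ} (hT : 0 < T) {u : En n → ℝ → ℝ}
    (hu : IsAuxSolution S T u) {ε : ℝ} (hε : 0 < ε) {x : En n} (hx : x ∈ closure S.Q)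
    {t : ℝ} (ht : t ∈ Set.Icc (0:ℝ) T) :
    0 ≤ u x t - S.c * t - S.u0 x + ε * t := by
  obtain ⟨husm, huH, hupde, hubdy, huinit⟩ := hu
  have hKc : IsCompact (closure S.Q) := S.hbdd.isCompact_closure
  set Φ : En n × ℝ → ℝ := fun p => u p.1 p.2 - S.c * p.2 - S.u0 p.1 + ε * p.2 with hΦ
  have hΦc : ContinuousOn Φ (closure S.Q ×ˢ Set.Icc 0 T) := by
    have c1 : ContinuousOn (fun p : En n × ℝ => u p.1 p.2) (closure S.Q ×ˢ Set.Icc 0 T) :=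
      husm.continuousOn
    have c2 : ContinuousOn (fun p : En n × ℝ => S.c * p.2) (closure S.Q ×ˢ Set.Icc 0 T) :=
      (continuous_const.mul continuous_snd).continuousOn
    have c3 : ContinuousOn (fun p : En n × ℝ => S.u0 p.1) (closure S.Q ×ˢ Set.Icc 0 T) :=
      S.hu0_smooth.continuousOn.comp continuous_fst.continuousOn (fun p hp => hp.1)
    have c4 : ContinuousOn (fun p : En n × ℝ => ε * p.2) (closure S.Q ×ˢ Set.Icc 0 T) :=
      (continuous_const.mul continuous_snd).continuousOn
    exact ((c1.sub c2).sub c3).add c4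
  obtain ⟨⟨x₀, t₀⟩, hmem, hminOn⟩ :=
    (hKc.prod isCompact_Icc).exists_isMinOn ⟨(x, t), hx, ht⟩ hΦc
  by_contra hneg
  push_neg at hneg
  have hminlt : Φ (x₀, t₀) < 0 :=
    lt_of_le_of_lt (isMinOn_iff.1 hminOn (x, t) ⟨hx, ht⟩) hneg
  have hx₀cl : x₀ ∈ closure S.Q := hmem.1
  have ht₀ : t₀ ∈ Set.Icc (0:ℝ) T := hmem.2
  have ht₀pos : 0 < t₀ := by
    rcases eq_or_lt_of_le ht₀.1 with h | h
    · exfalso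
      have h0 : Φ (x₀, t₀) = 0 := by
        simp only [hΦ, ← h]
        rw [huinit x₀ hx₀cl]
        ring
      linarith
    · exact h
  have hx₀Q : x₀ ∈ S.Q := by
    rcases mem_Q_or_frontier S hx₀cl with h | h
    · exact h
    · exfalso
      have h0 : Φ (x₀, t₀) = ε * t₀ := by
        simp only [hΦ]
        rw [hubdy x₀ h t₀ ht₀, S.hu0_bdry x₀ h]
        ring
      nlinarith [hε, ht₀pos]
  -- spatial comparison at (x₀, t₀)
  have hfat : ContDiffAt ℝ (⊤ : ℕ∞) (fun y => u y t₀) x₀ :=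
    (slice_contDiffOn S husm ht₀).contDiffAt (closure_mem_nhds S hx₀Q)
  have hu0at : ContDiffAt ℝ (⊤ : ℕ∞) S.u0 x₀ :=
    S.hu0_smooth.contDiffAt (closure_mem_nhds S hx₀Q)
  have hL : IsLocalMin (fun y => (fun z => u z t₀) y - S.u0 y) x₀ := by
    have hminon : IsMinOn (fun y => (fun z => u z t₀) y - S.u0 y) (closure S.Q) x₀ := by
      rw [isMinOn_iff]
      intro y hy
      have h1 := isMinOn_iff.1 hminOn (y, t₀) ⟨hy, ht₀⟩
      simp only [hΦ] at h1
      simp only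
      linarith
    exact hminon.isLocalMin (closure_mem_nhds S hx₀Q)
  obtain ⟨hgveq, hHle⟩ := meanCurv_comparison hfat hu0at hL
  have hGle : Gop S.alp S.u0 x₀ ≤ Gop S.alp (fun y => u y t₀) x₀ := by
    rw [Gop, Gop, hgveq]
    refine mul_le_mul_of_nonneg_left ?_ (le_of_lt (graphV_pos _ _))
    exact Real.rpow_le_rpow (S.hu0_H x₀ hx₀cl).le hHle (S.halp_pos x₀ hx₀cl).le
  have hRc : S.c ≤ Gop S.alp (fun y => u y t₀) x₀
      - S.xi x₀ * (Gop S.alp S.u0 x₀ - S.c) := by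
    have h1 := S.hGc x₀ hx₀cl
    have h2 := S.hxi_range x₀ hx₀cl
    have h3 : 0 ≤ (1 - S.xi x₀) * (Gop S.alp S.u0 x₀ - S.c) :=
      mul_nonneg (by linarith [h2.2]) (by linarith)
    nlinarith [hGle]
  have ht₀T : t₀ ∈ Set.Ioc (0:ℝ) T := ⟨ht₀pos, ht₀.2⟩
  have hpde := hupde x₀ hx₀Q t₀ ht₀T
  by_cases hdiff : DifferentiableAt ℝ (u x₀) t₀
  · have hud : HasDerivAt (u x₀)
        (Gop S.alp (fun y => u y t₀) x₀ - S.xi x₀ * (Gop S.alp S.u0 x₀ - S.c)) t₀ := by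
      have h0 := hdiff.hasDerivAt
      rwa [hpde] at h0
    have h1 : HasDerivAt (fun s : ℝ => S.c * s) S.c t₀ := by
      simpa using (hasDerivAt_id t₀).const_mul S.c
    have h2 : HasDerivAt (fun s : ℝ => ε * s) ε t₀ := by
      simpa using (hasDerivAt_id t₀).const_mul ε
    have hF : HasDerivAt (fun s => u x₀ s - S.c * s - S.u0 x₀ + ε * s)
        (Gop S.alp (fun y => u y t₀) x₀ - S.xi x₀ * (Gop S.alp S.u0 x₀ - S.c)
          - S.c + ε) t₀ :=
      ((hud.sub h1).sub_const (S.u0 x₀)).add h2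
    have hminT : ∀ s ∈ Set.Icc (0:ℝ) t₀,
        (fun s => u x₀ s - S.c * s - S.u0 x₀ + ε * s) t₀
          ≤ (fun s => u x₀ s - S.c * s - S.u0 x₀ + ε * s) s := by
      intro s hs
      have hmemK : ((x₀, s) : En n × ℝ) ∈ closure S.Q ×ˢ Set.Icc 0 T :=
        ⟨hx₀cl, hs.1, le_trans hs.2 ht₀.2⟩
      have := isMinOn_iff.1 hminOn (x₀, s) hmemK
      simpa [hΦ] using this
    have hd0 := deriv_nonpos_of_left_min hF ht₀pos hminT
    linarith
  · have h0 : deriv (u x₀) t₀ = 0 := deriv_zero_of_not_differentiableAt hdiff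
    rw [h0] at hpde
    linarith [S.hc]

end AuxPf


/-- `u₀(x) ≤ u(x,t) − c·t ≤ 0` for solutions of the auxiliary problem. -/
theorem aux_problem_height_bounds (n : ℕ) (S : AuxSetting n) (T : ℝ) (hT : 0 < T)
    (u : En n → ℝ → ℝ) (hu : IsAuxSolution S T u) :
    ∀ x ∈ closure S.Q, ∀ t ∈ Set.Icc (0:ℝ) T,
      S.u0 x ≤ u x t - S.c * t ∧ u x t - S.c * t ≤ 0 := by
  intro x hx t ht
  constructor
  · by_contra hcon
    push_neg at hcon
    set d : ℝ := S.u0 x - (u x t - S.c * t) with hd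
    have hdpos : 0 < d := by rw [hd]; linarith
    have hεpos : 0 < d / (2 * (T + 1)) := div_pos hdpos (by linarith)
    have hclaim := AuxPf.lower_claim S hT hu hεpos hx ht
    have h1 : d / (2 * (T + 1)) * t ≤ d / (2 * (T + 1)) * T :=
      mul_le_mul_of_nonneg_left ht.2 hεpos.le
    have h2 : d / (2 * (T + 1)) * T < d := by
      rw [div_mul_eq_mul_div, div_lt_iff₀ (by linarith : (0:ℝ) < 2 * (T + 1))]
      nlinarith [mul_pos hdpos (show (0:ℝ) < T + 2 by linarith)]
    linarith
  · have := AuxPf.upper_bound S hu ht hx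
    linarith
end
end

section
/- Under the auxiliary problem setting, every solution u of the auxiliary problem on [0,T] (T > 0 arbitrary) satisfies the boundary gradient estimate |∇u(x,t)| ≤ |∇u₀(x)| for every x ∈ ∂Q and t ∈ [0,T], where the spatial gradients at boundary points are understood as the continuous extensions from Q. -/
noncomputable section
open Set

-- ===================== auxiliary development =====================
namespace BGE
open Filter Topology
variable {n : ℕ}

noncomputable abbrev sm : WithTop ℕ∞ := (⊤ : ℕ∞)

lemma sum_single_eq (v : En n) :
    ∑ i, (v i) • EuclideanSpace.single i (1:ℝ) = v := by
  ext j; simp [WithLp.ofLp_sum, Pi.single_apply]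

lemma apply_eq_sum (L : En n →L[ℝ] ℝ) (v : En n) :
    L v = ∑ i, v i * L (EuclideanSpace.single i 1) := by
  conv_lhs => rw [← sum_single_eq v]
  rw [map_sum]; simp

lemma contDiffAt_pd {f : En n → ℝ} {x : En n} (hf : ContDiffAt ℝ sm f x) (i : Fin n) :
    ContDiffAt ℝ sm (pd f i) x := by
  have h1 : ContDiffAt ℝ sm (fderiv ℝ f) x := hf.fderiv_right (by simp [sm])
  exact ((ContinuousLinearMap.apply ℝ ℝ (EuclideanSpace.single i 1)).contDiff.contDiffAt).comp x h1

lemma diffAt_of_contDiffAt {f : En n → ℝ} {x : En n} (hf : ContDiffAt ℝ sm f x) :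
    DifferentiableAt ℝ f x := hf.differentiableAt (by simp [sm])

lemma one_add_gradNormSq_pos (f : En n → ℝ) (x : En n) : 0 < 1 + gradNormSq f x := by
  have : 0 ≤ gradNormSq f x := Finset.sum_nonneg fun i _ => sq_nonneg _
  linarith

lemma graphV_pos (f : En n → ℝ) (x : En n) : 0 < graphV f x :=
  Real.sqrt_pos.2 (one_add_gradNormSq_pos f x)

lemma graphV_sq (f : En n → ℝ) (x : En n) : (graphV f x)^2 = 1 + gradNormSq f x :=
  Real.sq_sqrt (one_add_gradNormSq_pos f x).le

/-- Fréchet derivative of `gradNormSq`. -/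
noncomputable def DG (f : En n → ℝ) (x : En n) : En n →L[ℝ] ℝ :=
  ∑ j, (2 * pd f j x) • fderiv ℝ (pd f j) x

lemma hasFDerivAt_gradNormSq {f : En n → ℝ} {x : En n} (hf : ContDiffAt ℝ sm f x) :
    HasFDerivAt (gradNormSq f) (DG f x) x := by
  have : HasFDerivAt (fun y => ∑ j, (pd f j y)^2)
      (∑ j ∈ Finset.univ, (2 * pd f j x) • fderiv ℝ (pd f j) x) x := by
    apply HasFDerivAt.fun_sum
    intro j _
    have hq : HasFDerivAt (pd f j) (fderiv ℝ (pd f j) x) x :=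
      (diffAt_of_contDiffAt (contDiffAt_pd hf j)).hasFDerivAt
    have h2 : HasFDerivAt (fun y => pd f j y * pd f j y)
        (pd f j x • fderiv ℝ (pd f j) x + pd f j x • fderiv ℝ (pd f j) x) x := hq.mul hq
    simpa [pow_two, two_mul, add_smul] using h2
  exact this

lemma DG_apply (f : En n → ℝ) (x : En n) (i : Fin n) :
    DG f x (EuclideanSpace.single i 1) = ∑ j, 2 * pd f j x * pd (pd f j) i x := by
  simp [DG, ContinuousLinearMap.sum_apply, pd, mul_assoc]

lemma hasFDerivAt_graphV {f : En n → ℝ} {x : En n} (hf : ContDiffAt ℝ sm f x) :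
    HasFDerivAt (graphV f) ((1 / (2 * graphV f x)) • DG f x) x := by
  have h1 : HasFDerivAt (fun y => 1 + gradNormSq f y) (DG f x) x :=
    (hasFDerivAt_gradNormSq hf).const_add 1
  have h2 := (Real.hasDerivAt_sqrt (one_add_gradNormSq_pos f x).ne').comp_hasFDerivAt x h1
  exact h2

lemma meanCurv_formula {f : En n → ℝ} {x : En n} (hf : ContDiffAt ℝ sm f x) :
    meanCurv f x = (∑ i, pd (pd f i) i x) / graphV f x
      - (∑ i, ∑ j, pd f i x * pd f j x * pd (pd f i) j x) / (graphV f x)^3 := by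
  set V := graphV f x with hV
  have hV0 : V ≠ 0 := (graphV_pos f x).ne'
  have key : ∀ i, pd (fun y => pd f i y / graphV f y) i x
      = pd (pd f i) i x / V - pd f i x * (∑ j, pd f j x * pd (pd f j) i x) / V^3 := by
    intro i
    have hq : HasFDerivAt (pd f i) (fderiv ℝ (pd f i) x) x :=
      (diffAt_of_contDiffAt (contDiffAt_pd hf i)).hasFDerivAt
    have hInv : HasFDerivAt (fun y => (graphV f y)⁻¹)
        ((-(V^2)⁻¹) • ((1 / (2 * V)) • DG f x)) x :=
      (hasDerivAt_inv hV0).comp_hasFDerivAt x (hasFDerivAt_graphV hf)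
    have hMul : HasFDerivAt (fun y => pd f i y * (graphV f y)⁻¹)
        (pd f i x • ((-(V^2)⁻¹) • ((1 / (2 * V)) • DG f x)) + (V)⁻¹ • fderiv ℝ (pd f i) x) x :=
      hq.mul hInv
    have heq : (fun y => pd f i y / graphV f y) = fun y => pd f i y * (graphV f y)⁻¹ := by
      funext y; rw [div_eq_mul_inv]
    rw [show pd (fun y => pd f i y / graphV f y) i x
        = (fderiv ℝ (fun y => pd f i y / graphV f y) x) (EuclideanSpace.single i 1) from rfl,
      heq, hMul.fderiv]
    have h2 : (∑ j, 2 * pd f j x * pd (pd f j) i x) = 2 * ∑ j, pd f j x * pd (pd f j) i x := by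
      rw [Finset.mul_sum]; exact Finset.sum_congr rfl fun j _ => by ring
    simp only [ContinuousLinearMap.add_apply, ContinuousLinearMap.smul_apply, DG_apply, h2]
    have h3 : fderiv ℝ (pd f i) x (EuclideanSpace.single i 1) = pd (pd f i) i x := rfl
    rw [h3]
    field_simp
    have hVV : V * V⁻¹ = 1 := mul_inv_cancel₀ hV0
    linear_combination (-((∑ j, pd f j x * pd (pd f j) i x) * pd f i x) * ((V * V⁻¹)^2 + V * V⁻¹ + 1) + V^2 * pd (pd f i) i x) * hVV
  unfold meanCurv
  rw [Finset.sum_congr rfl fun i _ => key i]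
  rw [Finset.sum_sub_distrib, ← Finset.sum_div, ← Finset.sum_div]
  congr 1
  rw [Finset.sum_comm]
  congr 1
  apply Finset.sum_congr rfl; intro j _
  rw [Finset.mul_sum]
  apply Finset.sum_congr rfl; intro i _
  ring

lemma hasDerivAt_line {f : En n → ℝ} {x v : En n} {s : ℝ}
    (hf : DifferentiableAt ℝ f (x + s • v)) :
    HasDerivAt (fun r : ℝ => f (x + r • v)) (fderiv ℝ f (x + s • v) v) s := by
  have hline : HasDerivAt (fun r : ℝ => x + r • v) v s := by
    simpa using ((hasDerivAt_id s).smul_const v).const_add x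
  exact hf.hasFDerivAt.comp_hasDerivAt s hline

lemma eventually_diffAt {f : En n → ℝ} {x : En n} (hf : ContDiffAt ℝ sm f x) :
    ∀ᶠ y in 𝓝 x, DifferentiableAt ℝ f y := by
  have h1 : ContDiffAt ℝ 1 f x := hf.of_le (by simp [sm])
  filter_upwards [h1.eventually (by simp)] with y hy
  exact hy.differentiableAt one_ne_zero

lemma second_deriv_test_min {f : En n → ℝ} {x : En n} (hf : ContDiffAt ℝ sm f x)
    (h0 : fderiv ℝ f x = 0) (hmin : IsLocalMin f x) (v : En n) :
    0 ≤ ∑ i, ∑ j, v i * v j * pd (pd f i) j x := by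
  by_contra hA'
  push_neg at hA'
  set A := ∑ i, ∑ j, v i * v j * pd (pd f i) j x with hAdef
  set g : ℝ → ℝ := fun r => f (x + r • v) with hgdef
  set g' : ℝ → ℝ := fun s => ∑ i, v i * pd f i (x + s • v) with hg'def
  have hev : ∀ᶠ y in 𝓝 x, DifferentiableAt ℝ f y := eventually_diffAt hf
  obtain ⟨ε, hε, hball⟩ := Metric.eventually_nhds_iff.1 hev
  set δ := ε / (‖v‖ + 1) with hδdef
  have hδ : 0 < δ := div_pos hε (by positivity)
  have hmem : ∀ r : ℝ, |r| < δ → DifferentiableAt ℝ f (x + r • v) := by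
    intro r hr
    apply hball
    have hd : dist (x + r • v) x = |r| * ‖v‖ := by
      simp [dist_eq_norm, norm_smul, abs_of_nonneg]
    rw [hd]
    calc |r| * ‖v‖ ≤ |r| * (‖v‖ + 1) := by nlinarith [abs_nonneg r, norm_nonneg v]
      _ < δ * (‖v‖ + 1) := by nlinarith [norm_nonneg v]
      _ = ε := by rw [hδdef]; field_simp
  have hgd : ∀ r : ℝ, |r| < δ → HasDerivAt g (g' r) r := by
    intro r hr
    have h := hasDerivAt_line (f := f) (x := x) (v := v) (s := r) (hmem r hr)
    rw [apply_eq_sum] at h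
    exact h
  have hg'0 : g' 0 = 0 := by
    have hz : (fun i => v i * pd f i (x + (0:ℝ) • v)) = fun i => 0 := by
      funext i; simp [pd, h0]
    simp only [hg'def, hz]
    simp
  have hg'' : HasDerivAt g' A 0 := by
    apply HasDerivAt.fun_sum
    intro i _
    have hd : DifferentiableAt ℝ (pd f i) (x + (0:ℝ) • v) := by
      simpa using diffAt_of_contDiffAt (contDiffAt_pd hf i)
    have h := (hasDerivAt_line (f := pd f i) (x := x) (v := v) (s := 0) hd).const_mul (v i)
    have hval : fderiv ℝ (pd f i) (x + (0:ℝ) • v) v = ∑ j, v j * pd (pd f i) j x := by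
      rw [show x + (0:ℝ) • v = x by simp, apply_eq_sum]
      rfl
    rw [hval] at h
    simpa [Finset.mul_sum, mul_assoc] using h
  have hslope : Tendsto (slope g' 0) (𝓝[≠] (0:ℝ)) (𝓝 A) :=
    hasDerivAt_iff_tendsto_slope.1 hg''
  have hlt : ∀ᶠ s in 𝓝[≠] (0:ℝ), slope g' 0 s < 0 :=
    hslope.eventually_lt_const hA'
  have hneg : ∀ᶠ s in 𝓝[>] (0:ℝ), g' s < 0 := by
    have h1 : ∀ᶠ s in 𝓝[>] (0:ℝ), slope g' 0 s < 0 :=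
      hlt.filter_mono (nhdsWithin_mono 0 fun s hs => ne_of_gt hs)
    filter_upwards [h1, self_mem_nhdsWithin] with s hs hs0
    rw [slope_def_field, hg'0, sub_zero, sub_zero] at hs
    rcases div_neg_iff.1 hs with ⟨_, h⟩ | ⟨h, _⟩
    · exact absurd hs0 (not_lt.2 h.le)
    · exact h
  obtain ⟨r₁, hr₁mem, hr₁⟩ := mem_nhdsGT_iff_exists_Ioo_subset.1 hneg
  have hr₁pos : 0 < r₁ := hr₁mem
  have hminev : ∀ᶠ r in 𝓝 (0:ℝ), g 0 ≤ g r := by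
    have ht : Tendsto (fun r : ℝ => x + r • v) (𝓝 0) (𝓝 x) := by
      have hcont : Continuous fun r : ℝ => x + r • v :=
        continuous_const.add (continuous_id.smul continuous_const)
      simpa using hcont.tendsto 0
    filter_upwards [ht.eventually hmin] with r hr
    simpa [hgdef] using hr
  obtain ⟨r₂, hr₂, hball2⟩ := Metric.eventually_nhds_iff.1 hminev
  set ρ := min δ (min r₁ r₂) / 2 with hρdef
  have hminpos : 0 < min δ (min r₁ r₂) := lt_min hδ (lt_min hr₁pos hr₂)
  have hρ : 0 < ρ := by rw [hρdef]; linarith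
  have hρδ : ρ < δ := by
    have := min_le_left δ (min r₁ r₂); rw [hρdef]; linarith
  have hρr₁ : ρ < r₁ := by
    have h1 := min_le_right δ (min r₁ r₂)
    have h2 := min_le_left r₁ r₂
    rw [hρdef]; linarith
  have hρr₂ : ρ < r₂ := by
    have h1 := min_le_right δ (min r₁ r₂)
    have h2 := min_le_right r₁ r₂
    rw [hρdef]; linarith
  have hanti : StrictAntiOn g (Icc 0 ρ) := by
    apply strictAntiOn_of_deriv_neg (convex_Icc 0 ρ)
    · intro s hs
      have hb : |s| < δ := by rw [abs_of_nonneg hs.1]; linarith [hs.2]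
      exact (hgd s hb).continuousAt.continuousWithinAt
    · intro s hs
      rw [interior_Icc] at hs
      have hb : |s| < δ := by rw [abs_of_nonneg hs.1.le]; linarith [hs.2]
      rw [(hgd s hb).deriv]
      exact hr₁ ⟨hs.1, by linarith [hs.2]⟩
  have h1 : g ρ < g 0 := hanti (left_mem_Icc.2 hρ.le) (right_mem_Icc.2 hρ.le) hρ
  have h2 : g 0 ≤ g ρ := hball2 (by rw [Real.dist_eq, sub_zero, abs_of_nonneg hρ.le]; linarith)
  linarith

lemma hess_sub {f g : En n → ℝ} {x : En n} (hf : ContDiffAt ℝ sm f x)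
    (hg : ContDiffAt ℝ sm g x) (i j : Fin n) :
    pd (pd (fun y => f y - g y) i) j x = pd (pd f i) j x - pd (pd g i) j x := by
  have h1 : (fun y => pd (fun z => f z - g z) i y) =ᶠ[𝓝 x] fun y => pd f i y - pd g i y := by
    filter_upwards [eventually_diffAt hf, eventually_diffAt hg] with y hfy hgy
    simp [pd, fderiv_fun_sub hfy hgy]
  show fderiv ℝ (pd (fun y => f y - g y) i) x (EuclideanSpace.single j 1) = _
  rw [h1.fderiv_eq, fderiv_fun_sub (diffAt_of_contDiffAt (contDiffAt_pd hf i))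
    (diffAt_of_contDiffAt (contDiffAt_pd hg i))]
  simp [pd]

lemma hess_neg (f : En n → ℝ) (x : En n) (i j : Fin n) :
    pd (pd (fun y => -f y) i) j x = -pd (pd f i) j x := by
  have h1 : pd (fun z => -f z) i = fun y => -pd f i y := by
    funext y; simp [pd, fderiv_fun_neg]
  show fderiv ℝ (pd (fun y => -f y) i) x (EuclideanSpace.single j 1) = _
  rw [h1, fderiv_fun_neg]
  simp [pd]

lemma second_deriv_test_max {f : En n → ℝ} {x : En n} (hf : ContDiffAt ℝ sm f x)
    (h0 : fderiv ℝ f x = 0) (hmax : IsLocalMax f x) (v : En n) :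
    ∑ i, ∑ j, v i * v j * pd (pd f i) j x ≤ 0 := by
  have h := second_deriv_test_min (f := fun y => -f y) hf.neg
    (by rw [fderiv_fun_neg, h0, neg_zero]) hmax.neg v
  have he : ∑ i, ∑ j, v i * v j * pd (pd (fun y => -f y) i) j x
      = -∑ i, ∑ j, v i * v j * pd (pd f i) j x := by
    rw [← Finset.sum_neg_distrib]
    apply Finset.sum_congr rfl; intro i _
    rw [← Finset.sum_neg_distrib]
    apply Finset.sum_congr rfl; intro j _
    rw [hess_neg]; ring
  rw [he] at h
  linarith

lemma quad_bound (N : Fin n → Fin n → ℝ) (p : Fin n → ℝ)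
    (hN : ∀ v : En n, 0 ≤ ∑ i, ∑ j, v i * v j * N i j) :
    ∑ i, ∑ j, p i * p j * N i j ≤ (∑ i, (p i)^2) * (∑ i, N i i) := by
  have hdiag : ∀ i, 0 ≤ N i i := by
    intro i
    have := hN (EuclideanSpace.single i 1)
    simpa [EuclideanSpace.single_apply] using this
  have hq : ∀ i j, ∀ s : ℝ, 0 ≤ N i i * (s * s) + (N i j + N j i) * s + N j j := by
    intro i j s
    have h := hN ((WithLp.equiv 2 (Fin n → ℝ)).symm
      (fun k => (if k = i then s else 0) + (if k = j then 1 else 0)))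
    have hco : ∀ k, ((WithLp.equiv 2 (Fin n → ℝ)).symm
        (fun k => (if k = i then s else 0) + (if k = j then 1 else 0))) k
        = (if k = i then s else 0) + (if k = j then 1 else 0) := fun k => rfl
    simp only [hco] at h
    calc (0:ℝ) ≤ _ := h
      _ = N i i * (s * s) + (N i j + N j i) * s + N j j := by
        simp only [add_mul, mul_add, ite_mul, mul_ite, zero_mul, mul_zero, zero_add, add_zero,
          Finset.sum_add_distrib, Finset.sum_ite_eq, Finset.sum_ite_eq', Finset.mem_univ,
          if_true, one_mul]
        ring
  have hsym : ∑ i, ∑ j, p i * p j * N i j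
      = ∑ i, ∑ j, p i * p j * ((N i j + N j i)/2) := by
    have h1 : ∑ i, ∑ j, p i * p j * N i j = ∑ i, ∑ j, p i * p j * N j i := by
      rw [Finset.sum_comm]
      apply Finset.sum_congr rfl; intro i _
      apply Finset.sum_congr rfl; intro j _
      ring
    rw [show ∑ i, ∑ j, p i * p j * ((N i j + N j i)/2)
        = (∑ i, ∑ j, p i * p j * N i j)/2 + (∑ i, ∑ j, p i * p j * N j i)/2 from by
      rw [Finset.sum_div, Finset.sum_div, ← Finset.sum_add_distrib]
      apply Finset.sum_congr rfl; intro i _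
      rw [Finset.sum_div, Finset.sum_div, ← Finset.sum_add_distrib]
      apply Finset.sum_congr rfl; intro j _
      ring]
    rw [← h1]
    ring
  rw [hsym]
  calc ∑ i, ∑ j, p i * p j * ((N i j + N j i)/2)
      ≤ ∑ i, ∑ j, (|p i| * Real.sqrt (N i i)) * (|p j| * Real.sqrt (N j j)) := by
        apply Finset.sum_le_sum; intro i _
        apply Finset.sum_le_sum; intro j _
        calc p i * p j * ((N i j + N j i)/2)
            ≤ |p i * p j * ((N i j + N j i)/2)| := le_abs_self _
          _ = |p i| * |p j| * |(N i j + N j i)/2| := by rw [abs_mul, abs_mul]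
          _ ≤ |p i| * |p j| * (Real.sqrt (N i i) * Real.sqrt (N j j)) := by
              apply mul_le_mul_of_nonneg_left _ (by positivity)
              calc |(N i j + N j i)/2| = Real.sqrt (((N i j + N j i)/2)^2) :=
                    (Real.sqrt_sq_eq_abs _).symm
                _ ≤ Real.sqrt (N i i * N j j) := by
                    apply Real.sqrt_le_sqrt
                    have hd : discrim (N i i) (N i j + N j i) (N j j) ≤ 0 :=
                      discrim_le_zero (hq i j)
                    rw [discrim] at hd
                    nlinarith
                _ = Real.sqrt (N i i) * Real.sqrt (N j j) := Real.sqrt_mul (hdiag i) _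
          _ = (|p i| * Real.sqrt (N i i)) * (|p j| * Real.sqrt (N j j)) := by ring
    _ = (∑ i, |p i| * Real.sqrt (N i i))^2 := by
        rw [sq, Finset.sum_mul_sum]
    _ ≤ (∑ i, (|p i|)^2) * (∑ i, (Real.sqrt (N i i))^2) :=
        Finset.sum_mul_sq_le_sq_mul_sq _ _ _
    _ = (∑ i, (p i)^2) * (∑ i, N i i) := by
        congr 1
        · exact Finset.sum_congr rfl fun i _ => sq_abs _
        · exact Finset.sum_congr rfl fun i _ => Real.sq_sqrt (hdiag i)

end BGE
-- ===================== solution estimates =====================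
namespace BGE
open Filter Topology
variable {n : ℕ}

lemma Qopen (S : AuxSetting n) : IsOpen S.Q := by
  rw [S.hQdef]
  exact isOpen_lt S.hrho.continuous continuous_const

lemma closure_cpt (S : AuxSetting n) : IsCompact (closure S.Q) :=
  Metric.isCompact_of_isClosed_isBounded isClosed_closure S.hbdd.closure

lemma slice_smooth {S : AuxSetting n} {T : ℝ} {u : En n → ℝ → ℝ}
    (hu : IsAuxSolution S T u) {t : ℝ} (ht : t ∈ Set.Icc 0 T) :
    ContDiffOn ℝ sm (fun y => u y t) (closure S.Q) := by
  have h1 : ContDiffOn ℝ sm (fun p : En n × ℝ => u p.1 p.2) (closure S.Q ×ˢ Set.Icc 0 T) :=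
    hu.1.of_le (by simp)
  have h2 : ContDiffOn ℝ sm (fun y : En n => ((y, t) : En n × ℝ)) (closure S.Q) :=
    (contDiff_id.prodMk contDiff_const).contDiffOn
  exact h1.comp h2 fun y hy => ⟨hy, ht⟩

lemma u0_smooth' (S : AuxSetting n) : ContDiffOn ℝ sm S.u0 (closure S.Q) :=
  S.hu0_smooth.of_le (by simp)

lemma contDiffAt_of_mem {f : En n → ℝ} {S : AuxSetting n}
    (hf : ContDiffOn ℝ sm f (closure S.Q)) {x : En n} (hx : x ∈ S.Q) :
    ContDiffAt ℝ sm f x :=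
  hf.contDiffAt (mem_of_superset ((Qopen S).mem_nhds hx) subset_closure)

/-- Statement (i): `u(·,t) ≤ c t` on `closure Q`. -/
lemma sol_le {S : AuxSetting n} {T : ℝ} {u : En n → ℝ → ℝ} (hu : IsAuxSolution S T u)
    {t : ℝ} (ht : t ∈ Set.Icc 0 T) : ∀ y ∈ closure S.Q, u y t ≤ S.c * t := by
  intro y hy
  have hfs : ContDiffOn ℝ sm (fun y => u y t) (closure S.Q) := slice_smooth hu ht
  obtain ⟨z, hz, hzmax⟩ := (closure_cpt S).exists_isMaxOn ⟨y, hy⟩ hfs.continuousOn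
  have hzQ : z ∉ S.Q := by
    intro hzQ
    have hfx : ContDiffAt ℝ sm (fun y => u y t) z := contDiffAt_of_mem hfs hzQ
    have hmax : IsLocalMax (fun y => u y t) z :=
      hzmax.isLocalMax (mem_of_superset ((Qopen S).mem_nhds hzQ) subset_closure)
    have h0 : fderiv ℝ (fun y => u y t) z = 0 := hmax.fderiv_eq_zero
    have hdiag : ∀ i, pd (pd (fun y => u y t) i) i z ≤ 0 := by
      intro i
      have h := second_deriv_test_max hfx h0 hmax (EuclideanSpace.single i 1)
      simpa [EuclideanSpace.single_apply] using h
    have hP : ∀ i, pd (fun y => u y t) i z = 0 := by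
      intro i; simp [pd, h0]
    have hG : gradNormSq (fun y => u y t) z = 0 := by simp [gradNormSq, hP]
    have hV : graphV (fun y => u y t) z = 1 := by simp [graphV, hG]
    have hform := meanCurv_formula hfx
    rw [hV] at hform
    have hzero : (∑ i, ∑ j, pd (fun y => u y t) i z * pd (fun y => u y t) j z
        * pd (pd (fun y => u y t) i) j z) = 0 := by
      apply Finset.sum_eq_zero; intro i _
      apply Finset.sum_eq_zero; intro j _
      rw [hP i]; ring
    rw [hzero] at hform
    have hcurv : meanCurv (fun y => u y t) z ≤ 0 := by
      rw [hform]
      have : (∑ i, pd (pd (fun y => u y t) i) i z) ≤ 0 :=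
        Finset.sum_nonpos fun i _ => hdiag i
      simpa using this
    have hpos := hu.2.1 t ht z hz
    linarith
  have hzf : z ∈ frontier S.Q := by
    rw [(Qopen S).frontier_eq]
    exact ⟨hz, hzQ⟩
  calc u y t ≤ u z t := hzmax hy
    _ = S.c * t := hu.2.2.2.1 z hzf t ht


set_option maxHeartbeats 1000000 in
/-- Statement (ii): `u₀ + c t ≤ u(·,t)` on `closure Q`. -/
lemma sol_ge {S : AuxSetting n} {T : ℝ} {u : En n → ℝ → ℝ} (hu : IsAuxSolution S T u)
    {t : ℝ} (ht : t ∈ Set.Icc 0 T) : ∀ y ∈ closure S.Q, S.u0 y + S.c * t ≤ u y t := by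
  intro y hy
  have main : ∀ ε : ℝ, 0 < ε → S.u0 y + (S.c - ε) * t ≤ u y t := by
    intro ε hε
    set K : Set (En n × ℝ) := closure S.Q ×ˢ Set.Icc 0 T with hK
    have hKcpt : IsCompact K := (closure_cpt S).prod isCompact_Icc
    have hKne : K.Nonempty := ⟨(y, t), hy, ht⟩
    set φ : En n × ℝ → ℝ := fun p => u p.1 p.2 - S.u0 p.1 - (S.c - ε) * p.2 with hφ
    have hφc : ContinuousOn φ K :=
      ((hu.1.continuousOn.sub ((u0_smooth' S).continuousOn.comp continuousOn_fst
        fun p hp => hp.1)).sub (continuousOn_const.mul continuousOn_snd))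
    obtain ⟨⟨x₀, t₀⟩, hmem, hminOn⟩ := hKcpt.exists_isMinOn hKne hφc
    have hx₀ : x₀ ∈ closure S.Q := hmem.1
    have ht₀ : t₀ ∈ Set.Icc 0 T := hmem.2
    by_cases hneg : 0 ≤ φ (x₀, t₀)
    · have h1 := hminOn (⟨hy, ht⟩ : (y, t) ∈ K)
      have h2 : φ (y, t) = u y t - S.u0 y - (S.c - ε) * t := rfl
      have h3 : (0:ℝ) ≤ φ (y, t) := le_trans hneg h1
      rw [h2] at h3
      linarith
    push_neg at hneg
    exfalso
    have hx₀Q : x₀ ∈ S.Q := by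
      by_contra hxq
      have hfr : x₀ ∈ frontier S.Q := by rw [(Qopen S).frontier_eq]; exact ⟨hx₀, hxq⟩
      have h1 : u x₀ t₀ = S.c * t₀ := hu.2.2.2.1 x₀ hfr t₀ ht₀
      have h2 : S.u0 x₀ = 0 := S.hu0_bdry x₀ hfr
      have h3 : φ (x₀, t₀) = ε * t₀ := by
        show u x₀ t₀ - S.u0 x₀ - (S.c - ε) * t₀ = ε * t₀
        rw [h1, h2]; ring
      rw [h3] at hneg
      nlinarith [ht₀.1]
    have ht₀pos : 0 < t₀ := by
      rcases lt_or_eq_of_le ht₀.1 with h | h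
      · exact h
      · exfalso
        have h1 : u x₀ 0 = S.u0 x₀ := hu.2.2.2.2 x₀ hx₀
        have h3 : φ (x₀, t₀) = 0 := by
          show u x₀ t₀ - S.u0 x₀ - (S.c - ε) * t₀ = 0
          rw [← h, h1]; ring
        rw [h3] at hneg
        exact lt_irrefl 0 hneg
    -- spatial analysis
    have hfsm : ContDiffAt ℝ sm (fun z => u z t₀) x₀ := contDiffAt_of_mem (slice_smooth hu ht₀) hx₀Q
    have h0sm : ContDiffAt ℝ sm S.u0 x₀ := contDiffAt_of_mem (u0_smooth' S) hx₀Q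
    have hψsm : ContDiffAt ℝ sm (fun z => u z t₀ - S.u0 z) x₀ := hfsm.sub h0sm
    have hψmin : IsLocalMin (fun z => u z t₀ - S.u0 z) x₀ := by
      filter_upwards [(Qopen S).eventually_mem hx₀Q] with z hz
      have h1 : φ (x₀, t₀) ≤ φ (z, t₀) := hminOn (⟨subset_closure hz, ht₀⟩ : (z, t₀) ∈ K)
      have h2 : φ (x₀, t₀) = u x₀ t₀ - S.u0 x₀ - (S.c - ε) * t₀ := rfl
      have h3 : φ (z, t₀) = u z t₀ - S.u0 z - (S.c - ε) * t₀ := rfl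
      rw [h2, h3] at h1
      show u x₀ t₀ - S.u0 x₀ ≤ u z t₀ - S.u0 z
      linarith
    have h0ψ : fderiv ℝ (fun z => u z t₀ - S.u0 z) x₀ = 0 := hψmin.fderiv_eq_zero
    have hfderiv : fderiv ℝ (fun z => u z t₀) x₀ = fderiv ℝ S.u0 x₀ := by
      have h1 : HasFDerivAt (fun z => u z t₀ - S.u0 z)
          (fderiv ℝ (fun z => u z t₀) x₀ - fderiv ℝ S.u0 x₀) x₀ :=
        ((diffAt_of_contDiffAt hfsm).hasFDerivAt).sub ((diffAt_of_contDiffAt h0sm).hasFDerivAt)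
      have h2 := h1.fderiv
      rw [h0ψ] at h2
      exact sub_eq_zero.1 h2.symm
    have hPeq : ∀ i, pd (fun z => u z t₀) i x₀ = pd S.u0 i x₀ := fun i => by
      simp [pd, hfderiv]
    have hGeq : gradNormSq (fun z => u z t₀) x₀ = gradNormSq S.u0 x₀ := by
      unfold gradNormSq; exact Finset.sum_congr rfl fun i _ => by rw [hPeq]
    have hVeq : graphV (fun z => u z t₀) x₀ = graphV S.u0 x₀ := by
      unfold graphV; rw [hGeq]
    set N : Fin n → Fin n → ℝ :=
      fun i j => pd (pd (fun z => u z t₀) i) j x₀ - pd (pd S.u0 i) j x₀ with hNdef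
    have hNq : ∀ v : En n, 0 ≤ ∑ i, ∑ j, v i * v j * N i j := by
      intro v
      have h := second_deriv_test_min hψsm h0ψ hψmin v
      calc (0:ℝ) ≤ ∑ i, ∑ j, v i * v j * pd (pd (fun z => u z t₀ - S.u0 z) i) j x₀ := h
        _ = ∑ i, ∑ j, v i * v j * N i j := by
          apply Finset.sum_congr rfl; intro i _
          apply Finset.sum_congr rfl; intro j _
          rw [hess_sub hfsm h0sm]
    have hdiagN : ∀ i, 0 ≤ N i i := by
      intro i
      have := hNq (EuclideanSpace.single i 1)
      simpa [EuclideanSpace.single_apply] using this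
    have hquad := quad_bound N (fun i => pd (fun z => u z t₀) i x₀) hNq
    -- curvature comparison
    have hVpos := graphV_pos (fun z => u z t₀) x₀
    have hcomp : meanCurv S.u0 x₀ ≤ meanCurv (fun z => u z t₀) x₀ := by
      rw [meanCurv_formula hfsm, meanCurv_formula h0sm, ← hVeq]
      set V := graphV (fun z => u z t₀) x₀ with hVdef
      set tr := ∑ i, N i i with htr
      set A0 := ∑ i, pd (pd S.u0 i) i x₀ with hA0
      set B0 := ∑ i, ∑ j, pd S.u0 i x₀ * pd S.u0 j x₀ * pd (pd S.u0 i) j x₀ with hB0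
      have htrnn : 0 ≤ tr := Finset.sum_nonneg fun i _ => hdiagN i
      have hAf : ∑ i, pd (pd (fun z => u z t₀) i) i x₀ = A0 + tr := by
        rw [hA0, htr, ← Finset.sum_add_distrib]
        apply Finset.sum_congr rfl; intro i _
        simp only [hNdef]; ring
      have hBf : ∑ i, ∑ j, pd (fun z => u z t₀) i x₀ * pd (fun z => u z t₀) j x₀
          * pd (pd (fun z => u z t₀) i) j x₀
          = B0 + ∑ i, ∑ j, pd (fun z => u z t₀) i x₀ * pd (fun z => u z t₀) j x₀ * N i j := by
        rw [hB0, ← Finset.sum_add_distrib]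
        apply Finset.sum_congr rfl; intro i _
        rw [← Finset.sum_add_distrib]
        apply Finset.sum_congr rfl; intro j _
        rw [hPeq i, hPeq j]
        simp only [hNdef]
        ring
      rw [hAf, hBf]
      set DS := ∑ i, ∑ j, pd (fun z => u z t₀) i x₀ * pd (fun z => u z t₀) j x₀ * N i j with hDS
      have hDSle : DS ≤ (V^2 - 1) * tr := by
        have hg : gradNormSq (fun z => u z t₀) x₀ = V^2 - 1 := by
          rw [hVdef, graphV_sq]; ring
        calc DS ≤ (∑ i, (pd (fun z => u z t₀) i x₀)^2) * tr := hquad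
          _ = (V^2 - 1) * tr := by rw [show (∑ i, (pd (fun z => u z t₀) i x₀)^2)
                = gradNormSq (fun z => u z t₀) x₀ from rfl, hg]
      have hkey : 0 ≤ tr / V - DS / V^3 := by
        have he : tr / V - DS / V^3 = (V^2 * tr - DS) / V^3 := by
          field_simp
        rw [he]
        apply div_nonneg _ (by positivity)
        nlinarith
      have hV0 : V ≠ 0 := hVpos.ne'
      have hexp : (A0 + tr) / V - (B0 + DS) / V^3
          = (A0 / V - B0 / V^3) + (tr / V - DS / V^3) := by
        field_simp
        ring
      rw [hexp]
      linarith
    -- operator comparison and the equation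
    have hH0pos : 0 < meanCurv S.u0 x₀ := S.hu0_H x₀ hx₀
    have hαpos : 0 < S.alp x₀ := S.halp_pos x₀ hx₀
    have hrpow : meanCurv S.u0 x₀ ^ S.alp x₀ ≤ meanCurv (fun z => u z t₀) x₀ ^ S.alp x₀ :=
      Real.rpow_le_rpow hH0pos.le hcomp hαpos.le
    have hGole : Gop S.alp S.u0 x₀ ≤ Gop S.alp (fun z => u z t₀) x₀ := by
      unfold Gop
      rw [hVeq]
      exact mul_le_mul_of_nonneg_left hrpow (graphV_pos S.u0 x₀).le
    have hEq := hu.2.2.1 x₀ hx₀Q t₀ ⟨ht₀pos, ht₀.2⟩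
    have hξ := S.hxi_range x₀ hx₀
    have hGc := S.hGc x₀ hx₀
    have habs : ∀ a b ξc : ℝ, S.c ≤ b → b ≤ a → 0 ≤ ξc → ξc ≤ 1 →
        S.c ≤ a - ξc * (b - S.c) := by
      intro a b ξc h1 h2 h3 h4
      nlinarith
    have hderiv_ge : S.c ≤ deriv (u x₀) t₀ := by
      rw [hEq]
      exact habs _ _ _ hGc hGole hξ.1 hξ.2
    by_cases hdiff : DifferentiableAt ℝ (u x₀) t₀
    · have hslope : Filter.Tendsto (slope (u x₀) t₀) (nhdsWithin t₀ {t₀}ᶜ)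
          (nhds (deriv (u x₀) t₀)) :=
        hasDerivAt_iff_tendsto_slope.1 hdiff.hasDerivAt
      have hmono : Filter.Tendsto (slope (u x₀) t₀) (nhdsWithin t₀ (Set.Iio t₀))
          (nhds (deriv (u x₀) t₀)) :=
        hslope.mono_left (nhdsWithin_mono _ fun s hs => ne_of_lt hs)
      have hev : ∀ᶠ s in nhdsWithin t₀ (Set.Iio t₀), slope (u x₀) t₀ s ≤ S.c - ε := by
        have hIoo : Set.Ioo (0:ℝ) t₀ ∈ nhdsWithin t₀ (Set.Iio t₀) :=
          Ioo_mem_nhdsLT_of_mem ⟨ht₀pos, le_refl t₀⟩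
        filter_upwards [hIoo] with s hs
        have hsK : (x₀, s) ∈ K := ⟨hx₀, ⟨hs.1.le, hs.2.le.trans ht₀.2⟩⟩
        have hm : φ (x₀, t₀) ≤ φ (x₀, s) := hminOn hsK
        have h2 : φ (x₀, t₀) = u x₀ t₀ - S.u0 x₀ - (S.c - ε) * t₀ := rfl
        have h3 : φ (x₀, s) = u x₀ s - S.u0 x₀ - (S.c - ε) * s := rfl
        rw [h2, h3] at hm
        rw [slope_def_field]
        have hlt : s - t₀ < 0 := by linarith [hs.2]
        rw [div_le_iff_of_neg hlt]
        nlinarith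
      have hle : deriv (u x₀) t₀ ≤ S.c - ε := le_of_tendsto hmono hev
      linarith
    · have hz : deriv (u x₀) t₀ = 0 := deriv_zero_of_not_differentiableAt hdiff
      rw [hz] at hderiv_ge
      linarith [S.hc]
  -- pass to the limit ε → 0
  rcases eq_or_lt_of_le ht.1 with h0 | h0
  · have h1 : u y 0 = S.u0 y := hu.2.2.2.2 y hy
    rw [← h0, mul_zero, add_zero, h1]
  · by_contra hcon
    push_neg at hcon
    set d := S.u0 y + S.c * t - u y t with hd
    have hdpos : 0 < d := by rw [hd]; linarith
    have hm := main (d / (2 * t)) (by positivity)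
    have hexp : (S.c - d / (2 * t)) * t = S.c * t - d / 2 := by field_simp
    rw [hexp] at hm
    linarith


-- ===================== boundary geometry =====================

lemma exists_apply_ne_zero {L : En n →L[ℝ] ℝ} (hL : L ≠ 0) : ∃ z, L z ≠ 0 := by
  by_contra hc
  push_neg at hc
  exact hL (ContinuousLinearMap.ext fun z => by rw [hc z]; rfl)

lemma rep_halfspace (L D : En n →L[ℝ] ℝ) (hL : L ≠ 0)
    (h : ∀ v : En n, L v < 0 → D v ≤ 0) :
    ∃ lam : ℝ, 0 ≤ lam ∧ ∀ v, D v = lam * L v := by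
  obtain ⟨z, hz⟩ := exists_apply_ne_zero hL
  set w := if L z < 0 then z else -z with hw
  have hLw : L w < 0 := by
    rw [hw]
    split_ifs with h1
    · exact h1
    · rw [map_neg]
      rcases lt_or_gt_of_ne hz with h2 | h2
      · exact absurd h2 h1
      · linarith
  have h' : ∀ v : En n, L v ≤ 0 → D v ≤ 0 := by
    intro v hv
    by_contra hD
    push_neg at hD
    set ε := D v / (2 * (|D w| + 1)) with hε
    have hεpos : 0 < ε := div_pos hD (by positivity)
    have h1 : L (v + ε • w) < 0 := by
      rw [map_add, map_smul]
      have h2 : ε * L w < 0 := mul_neg_of_pos_of_neg hεpos hLw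
      simp only [smul_eq_mul]
      linarith
    have h2 := h _ h1
    rw [map_add, map_smul] at h2
    simp only [smul_eq_mul] at h2
    have h3 : D v ≤ ε * |D w| := by
      have h4 : ε * (-(D w)) ≤ ε * |D w| :=
        mul_le_mul_of_nonneg_left (neg_le_abs _) hεpos.le
      nlinarith
    have h4 : ε * (|D w| + 1) = D v / 2 := by rw [hε]; field_simp
    nlinarith [abs_nonneg (D w)]
  have hker : ∀ v, L v = 0 → D v = 0 := by
    intro v hv
    have h1 := h' v (le_of_eq hv)
    have h2 := h' (-v) (by rw [map_neg, hv, neg_zero])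
    rw [map_neg] at h2
    linarith
  refine ⟨D w / L w, by rw [div_nonneg_iff]; right; exact ⟨h w hLw, hLw.le⟩, ?_⟩
  intro v
  have hLw0 : L w ≠ 0 := hLw.ne
  have hd : L (v - (L v / L w) • w) = 0 := by
    rw [map_sub, map_smul]
    simp only [smul_eq_mul]
    rw [div_mul_cancel₀ _ hLw0, sub_self]
  have h1 := hker _ hd
  rw [map_sub, map_smul] at h1
  simp only [smul_eq_mul] at h1
  rw [sub_eq_zero] at h1
  rw [h1]
  field_simp

lemma rho_zero_of_frontier {S : AuxSetting n} {x : En n} (hx : x ∈ frontier S.Q) :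
    S.rho x = 0 := by
  have h1 : x ∈ {x | S.rho x = 0} := S.hfront ▸ hx
  exact h1

lemma eventually_mem_of_neg {S : AuxSetting n} {x : En n} (hx : x ∈ frontier S.Q)
    {v : En n} (hv : fderiv ℝ S.rho x v < 0) :
    ∀ᶠ s : ℝ in nhdsWithin 0 (Set.Ioi (0:ℝ)), x + s • v ∈ S.Q := by
  have hρx : S.rho x = 0 := rho_zero_of_frontier hx
  have hd : DifferentiableAt ℝ S.rho (x + (0:ℝ) • v) :=
    (S.hrho.differentiable (by simp)).differentiableAt
  have hline := hasDerivAt_line (f := S.rho) (x := x) (v := v) (s := 0) hd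
  rw [show x + (0:ℝ) • v = x by simp] at hline
  have hslope := hasDerivAt_iff_tendsto_slope.1 hline
  have hlt : ∀ᶠ s in nhdsWithin (0:ℝ) {(0:ℝ)}ᶜ,
      slope (fun r : ℝ => S.rho (x + r • v)) 0 s < 0 :=
    hslope.eventually_lt_const hv
  have h1 : ∀ᶠ s in nhdsWithin (0:ℝ) (Set.Ioi (0:ℝ)),
      slope (fun r : ℝ => S.rho (x + r • v)) 0 s < 0 :=
    hlt.filter_mono (nhdsWithin_mono 0 fun s hs => ne_of_gt hs)
  filter_upwards [h1, self_mem_nhdsWithin] with s hs hs0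
  rw [slope_def_field] at hs
  have h2 : S.rho (x + (0:ℝ) • v) = 0 := by simp [hρx]
  rw [h2, sub_zero, sub_zero] at hs
  have h3 : S.rho (x + s • v) < 0 := by
    rcases div_neg_iff.1 hs with ⟨_, h⟩ | ⟨h, _⟩
    · exact absurd hs0 (not_lt.2 h.le)
    · exact h
  rw [S.hQdef]
  exact h3

lemma mem_posTangentCone {S : AuxSetting n} {x : En n} (hx : x ∈ frontier S.Q)
    {v : En n} (hv : fderiv ℝ S.rho x v < 0) :
    v ∈ posTangentConeAt (closure S.Q) x :=
  mem_posTangentConeAt_of_frequently_mem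
    (((eventually_mem_of_neg hx hv).mono fun s hs => subset_closure hs).frequently)

lemma smul_mem_tangentCone {S : AuxSetting n} {x : En n} (hx : x ∈ frontier S.Q)
    {v : En n} (hv : fderiv ℝ S.rho x v < 0) :
    ∃ δ : ℝ, 0 < δ ∧ δ • v ∈ tangentConeAt ℝ (closure S.Q) x := by
  obtain ⟨r₁, hr₁mem, hr₁⟩ :=
    mem_nhdsGT_iff_exists_Ioo_subset.1 (eventually_mem_of_neg hx hv)
  have hr₁pos : (0:ℝ) < r₁ := hr₁mem
  refine ⟨r₁ / 2, by linarith, ?_⟩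
  have hseg : openSegment ℝ x (x + (r₁/2) • v) ⊆ closure S.Q := by
    intro p hp
    rw [openSegment_eq_image'] at hp
    obtain ⟨θ, hθ, hpe⟩ := hp
    have h2 : θ * (r₁/2) ∈ Set.Ioo (0:ℝ) r₁ := by
      constructor
      · exact mul_pos hθ.1 (by linarith)
      · nlinarith [hθ.2]
    have h1 : x + (θ * (r₁ / 2)) • v ∈ S.Q := hr₁ h2
    have hpeq : p = x + (θ * (r₁ / 2)) • v := by
      rw [← hpe]; simp [smul_smul]
    rw [hpeq]
    exact subset_closure h1
  have := mem_tangentConeAt_of_openSegment_subset hseg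
  simpa using this

lemma uniqueDiffOn_closureQ (S : AuxSetting n) : UniqueDiffOn ℝ (closure S.Q) := by
  intro x hx
  by_cases hxQ : x ∈ S.Q
  · exact uniqueDiffWithinAt_of_mem_nhds
      (mem_of_superset ((Qopen S).mem_nhds hxQ) subset_closure)
  · have hxf : x ∈ frontier S.Q := by
      rw [(Qopen S).frontier_eq]; exact ⟨hx, hxQ⟩
    have hLne : fderiv ℝ S.rho x ≠ 0 := S.hgrad x hxf
    set L := fderiv ℝ S.rho x with hL
    obtain ⟨z, hz⟩ := exists_apply_ne_zero hLne
    set w := if L z < 0 then z else -z with hw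
    have hLw : L w < 0 := by
      rw [hw]; split_ifs with h1
      · exact h1
      · rw [map_neg]
        rcases lt_or_gt_of_ne hz with h2 | h2
        · exact absurd h2 h1
        · linarith
    have hspan : ∀ v : En n, L v < 0 →
        v ∈ Submodule.span ℝ (tangentConeAt ℝ (closure S.Q) x) := by
      intro v hv
      obtain ⟨δ, hδ, hmem⟩ := smul_mem_tangentCone hxf hv
      have h1 : δ • v ∈ Submodule.span ℝ (tangentConeAt ℝ (closure S.Q) x) :=
        Submodule.subset_span hmem
      have h2 := Submodule.smul_mem _ δ⁻¹ h1
      rwa [smul_smul, inv_mul_cancel₀ hδ.ne', one_smul] at h2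
    have htop : Submodule.span ℝ (tangentConeAt ℝ (closure S.Q) x) = ⊤ := by
      rw [Submodule.eq_top_iff']
      intro y
      set ε := (-(L w)) / (2 * (|L y| + 1)) with hε
      have hεpos : 0 < ε := div_pos (by linarith) (by positivity)
      have h1 : L (w + ε • y) < 0 := by
        rw [map_add, map_smul]
        simp only [smul_eq_mul]
        have h2 : ε * L y ≤ ε * |L y| := mul_le_mul_of_nonneg_left (le_abs_self _) hεpos.le
        have h3 : ε * (|L y| + 1) = (-(L w)) / 2 := by rw [hε]; field_simp
        nlinarith [abs_nonneg (L y)]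
      have h4 := hspan _ h1
      have h5 := hspan _ hLw
      have h6 := Submodule.sub_mem _ h4 h5
      rw [add_sub_cancel_left] at h6
      have h7 := Submodule.smul_mem _ ε⁻¹ h6
      rwa [smul_smul, inv_mul_cancel₀ hεpos.ne', one_smul] at h7
    constructor
    · rw [htop, Submodule.top_coe]
      exact dense_univ
    · rw [closure_closure]
      exact hx

end BGE
-- ===================== end solution estimates =====================

/-- Boundary gradient estimate `|∇u(x,t)| ≤ |∇u₀(x)|` on `∂Q`, the
gradients at boundary points being understood as continuous extensions from `Q`. -/
theorem aux_problem_boundary_gradient_estimate (n : ℕ) (S : AuxSetting n) (T : ℝ)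
    (hT : 0 < T) (u : En n → ℝ → ℝ) (hu : IsAuxSolution S T u) :
    ∀ x ∈ frontier S.Q, ∀ t ∈ Set.Icc (0:ℝ) T, ∀ Lu L0 : ℝ,
      Filter.Tendsto (fun y => Real.sqrt (gradNormSq (fun z => u z t) y))
        (nhdsWithin x S.Q) (nhds Lu) →
      Filter.Tendsto (fun y => Real.sqrt (gradNormSq S.u0 y))
        (nhdsWithin x S.Q) (nhds L0) →
      Lu ≤ L0 := by
  intro x hx t ht Lu L0 hLu hL0
  classical
  have hxc : x ∈ closure S.Q := frontier_subset_closure hx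
  have hne : (nhdsWithin x S.Q).NeBot := by
    rw [mem_closure_iff_nhdsWithin_neBot] at hxc
    exact hxc
  have hxc' : x ∈ closure S.Q := frontier_subset_closure hx
  have hfs : ContDiffOn ℝ BGE.sm (fun z => u z t) (closure S.Q) := BGE.slice_smooth hu ht
  have hgs : ContDiffOn ℝ BGE.sm S.u0 (closure S.Q) := BGE.u0_smooth' S
  have hUD : UniqueDiffOn ℝ (closure S.Q) := BGE.uniqueDiffOn_closureQ S
  set Df := fderivWithin ℝ (fun z => u z t) (closure S.Q) x with hDf
  set Dg := fderivWithin ℝ S.u0 (closure S.Q) x with hDg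
  -- the Euclidean norm of a functional, as a continuous function
  have hΦ : Continuous (fun L : En n →L[ℝ] ℝ =>
      Real.sqrt (∑ i, (L (EuclideanSpace.single i 1))^2)) := by
    apply Real.continuous_sqrt.comp
    apply continuous_finset_sum
    intro i _
    exact ((ContinuousLinearMap.apply ℝ ℝ (EuclideanSpace.single i 1)).continuous).pow 2
  -- identify Lu
  have key : ∀ (f : En n → ℝ), ContDiffOn ℝ BGE.sm f (closure S.Q) →
      Filter.Tendsto (fun y => Real.sqrt (gradNormSq f y)) (nhdsWithin x S.Q)
        (nhds (Real.sqrt (∑ i, ((fderivWithin ℝ f (closure S.Q) x)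
          (EuclideanSpace.single i 1))^2))) := by
    intro f hf
    have hcont : ContinuousOn (fderivWithin ℝ f (closure S.Q)) (closure S.Q) :=
      hf.continuousOn_fderivWithin hUD (by simp [BGE.sm])
    have h1 : Filter.Tendsto (fderivWithin ℝ f (closure S.Q)) (nhdsWithin x S.Q)
        (nhds (fderivWithin ℝ f (closure S.Q) x)) :=
      (hcont x hxc').mono_left (nhdsWithin_mono x subset_closure)
    have h2 : Filter.Tendsto (fun y => fderiv ℝ f y) (nhdsWithin x S.Q)
        (nhds (fderivWithin ℝ f (closure S.Q) x)) := by
      apply h1.congr'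
      filter_upwards [self_mem_nhdsWithin] with y hy
      exact fderivWithin_of_mem_nhds (Filter.mem_of_superset ((BGE.Qopen S).mem_nhds hy) subset_closure)
    have h3 := (hΦ.tendsto _).comp h2
    exact h3
  have hLu' : Lu = Real.sqrt (∑ i, (Df (EuclideanSpace.single i 1))^2) :=
    tendsto_nhds_unique hLu (key _ hfs)
  have hL0' : L0 = Real.sqrt (∑ i, (Dg (EuclideanSpace.single i 1))^2) :=
    tendsto_nhds_unique hL0 (key _ hgs)
  -- derivatives within
  have hDfW : HasFDerivWithinAt (fun z => u z t) Df (closure S.Q) x :=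
    (hfs.differentiableOn (by simp [BGE.sm]) x hxc').hasFDerivWithinAt
  have hDgW : HasFDerivWithinAt S.u0 Dg (closure S.Q) x :=
    (hgs.differentiableOn (by simp [BGE.sm]) x hxc').hasFDerivWithinAt
  -- the defining functional
  set L := fderiv ℝ S.rho x with hLdef
  have hLne : L ≠ 0 := S.hgrad x hx
  -- maxima at x
  have hfmax : IsLocalMaxOn (fun z => u z t) (closure S.Q) x := by
    apply IsMaxOn.localize
    intro y hy
    show u y t ≤ u x t
    rw [hu.2.2.2.1 x hx t ht]
    exact BGE.sol_le hu ht y hy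
  have hgmax : IsLocalMaxOn S.u0 (closure S.Q) x := by
    apply IsMaxOn.localize
    intro y hy
    show S.u0 y ≤ S.u0 x
    rw [S.hu0_bdry x hx]
    exact S.hu0_nonpos y hy
  have hkmax : IsLocalMaxOn (fun z => S.u0 z - u z t) (closure S.Q) x := by
    apply IsMaxOn.localize
    intro y hy
    show S.u0 y - u y t ≤ S.u0 x - u x t
    rw [S.hu0_bdry x hx, hu.2.2.2.1 x hx t ht]
    have := BGE.sol_ge hu ht y hy
    linarith
  -- cone inequalities
  have hDfle : ∀ v : En n, L v < 0 → Df v ≤ 0 := fun v hv =>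
    hfmax.hasFDerivWithinAt_nonpos hDfW (BGE.mem_posTangentCone hx hv)
  have hDgle : ∀ v : En n, L v < 0 → Dg v ≤ 0 := fun v hv =>
    hgmax.hasFDerivWithinAt_nonpos hDgW (BGE.mem_posTangentCone hx hv)
  have hDkle : ∀ v : En n, L v < 0 → (Dg - Df) v ≤ 0 := fun v hv =>
    hkmax.hasFDerivWithinAt_nonpos (hDgW.sub hDfW) (BGE.mem_posTangentCone hx hv)
  obtain ⟨lam, hlam0, hlam⟩ := BGE.rep_halfspace L Df hLne hDfle
  obtain ⟨mu, hmu0, hmu⟩ := BGE.rep_halfspace L Dg hLne hDgle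
  obtain ⟨nu, hnu0, hnu⟩ := BGE.rep_halfspace L (Dg - Df) hLne hDkle
  obtain ⟨z, hz⟩ := BGE.exists_apply_ne_zero hLne
  have hlammu : lam ≤ mu := by
    have h1 := hnu z
    rw [ContinuousLinearMap.sub_apply, hmu z, hlam z] at h1
    have h2 : (mu - lam) * L z = nu * L z := by linarith
    have h3 : mu - lam = nu := mul_right_cancel₀ hz h2
    linarith
  -- compute the norms
  have hnorm : ∀ (D : En n →L[ℝ] ℝ) (a : ℝ), 0 ≤ a → (∀ v, D v = a * L v) →
      Real.sqrt (∑ i, (D (EuclideanSpace.single i 1))^2)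
        = a * Real.sqrt (∑ i, (L (EuclideanSpace.single i 1))^2) := by
    intro D a ha hD
    have h1 : ∑ i, (D (EuclideanSpace.single i 1))^2
        = a^2 * ∑ i, (L (EuclideanSpace.single i 1))^2 := by
      rw [Finset.mul_sum]
      apply Finset.sum_congr rfl
      intro i _
      rw [hD]
      ring
    rw [h1, Real.sqrt_mul (sq_nonneg a), Real.sqrt_sq ha]
  rw [hLu', hL0', hnorm Df lam hlam0 hlam, hnorm Dg mu hmu0 hmu]
  exact mul_le_mul_of_nonneg_right hlammu (Real.sqrt_nonneg _)
end
end
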